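/- arXiv:1209.5912 — 8 statements merged into one kernel-verified Lean document; each statement's English description precedes it below -/
import Mathlib

section
/- Let 𝒦 = {K₁, …, K_M} be a finite set of row-stochastic N×N real matrices, each with strictly positive diagonal entries, and let p₁, …, p_M be strictly positive reals summing to 1. Then the matrix Σᵢ pᵢKᵢ is primitive if and only if the N²×N² matrix Σᵢ pᵢ (Kᵢ ⊗ Kᵢ) is primitive. -/
open Matrix Kronecker Finset

/-- A square real matrix is row-stochastic if it has nonnegative entries and
each of its rows sums to 1. -/
def RowStochastic {N : ℕ} (K : Matrix (Fin N) (Fin N) ℝ) : Prop :=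
  (∀ i j, 0 ≤ K i j) ∧ ∀ i, ∑ j, K i j = 1

/-- A nonnegative square matrix `T` is primitive if `T ^ m` has all entries
strictly positive for some integer `m ≥ 1`. -/
def IsPrimitive {n : Type*} [Fintype n] [DecidableEq n] (T : Matrix n n ℝ) : Prop :=
  ∃ m : ℕ, 1 ≤ m ∧ ∀ i j, 0 < (T ^ m) i j

/-!
For products and powers of entrywise nonnegative matrices, which entries are positive depends only
on which entries of the factors are positive (`Matrix.posSupport`). Write `A = ∑ pₖ Kₖ` and
`B = ∑ pₖ (Kₖ ⊗ Kₖ)`. A positive entry of `B` comes from a single `Kₖ` and so is a positive entry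
of `A ⊗ A`; hence `B ^ m > 0` forces `A ^ m ⊗ A ^ m > 0`, i.e. `A ^ m > 0`. Conversely, the
positive diagonals of the `Kₖ` put the positive entries of `A ⊗ 1` and of `1 ⊗ A` among those
of `B`, so `A ^ m ⊗ A ^ m = (A ⊗ 1) ^ m * (1 ⊗ A) ^ m` has its positive entries among those of
`B ^ (2 * m)`.
-/

namespace Matrix

variable {l m n l' n' ι R : Type*}

theorem kronecker_pow [CommSemiring R] [Fintype m] [DecidableEq m] [Fintype n] [DecidableEq n]
    (A : Matrix m m R) (B : Matrix n n R) (k : ℕ) : (A ⊗ₖ B) ^ k = (A ^ k) ⊗ₖ (B ^ k) := by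
  induction k with
  | zero => simp
  | succ k ih => rw [pow_succ, pow_succ, pow_succ, ih, mul_kronecker_mul]

def posSupport [Zero R] [LT R] (A : Matrix m n R) : Set (m × n) := {ij | 0 < A ij.1 ij.2}

@[simp] lemma mem_posSupport [Zero R] [LT R] {A : Matrix m n R} {i : m} {j : n} :
    (i, j) ∈ A.posSupport ↔ 0 < A i j := Iff.rfl

variable [CommRing R] [LinearOrder R] [IsStrictOrderedRing R]

lemma mem_posSupport_mul [Fintype m] {A : Matrix l m R} {B : Matrix m n R}
    (hA : ∀ i j, 0 ≤ A i j) (hB : ∀ i j, 0 ≤ B i j) {i : l} {j : n} :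
    (i, j) ∈ (A * B).posSupport ↔ ∃ k, (i, k) ∈ A.posSupport ∧ (k, j) ∈ B.posSupport := by
  simp only [mem_posSupport, mul_apply]
  rw [Finset.sum_pos_iff_of_nonneg fun k _ => mul_nonneg (hA i k) (hB k j)]
  constructor
  · rintro ⟨k, -, hk⟩
    exact ⟨k, pos_of_mul_pos_left hk (hB k j), pos_of_mul_pos_right hk (hA i k)⟩
  · rintro ⟨k, hik, hkj⟩
    exact ⟨k, Finset.mem_univ k, mul_pos hik hkj⟩

lemma posSupport_mul_subset_mul [Fintype m] {A A' : Matrix l m R} {B B' : Matrix m n R}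
    (hA : ∀ i j, 0 ≤ A i j) (hB : ∀ i j, 0 ≤ B i j)
    (hA' : ∀ i j, 0 ≤ A' i j) (hB' : ∀ i j, 0 ≤ B' i j)
    (hAA' : A.posSupport ⊆ A'.posSupport) (hBB' : B.posSupport ⊆ B'.posSupport) :
    (A * B).posSupport ⊆ (A' * B').posSupport := by
  rintro ⟨i, j⟩ h
  obtain ⟨k, hik, hkj⟩ := (mem_posSupport_mul hA hB).1 h
  exact (mem_posSupport_mul hA' hB').2 ⟨k, hAA' hik, hBB' hkj⟩

lemma posSupport_pow_subset_pow [Fintype n] [DecidableEq n] {A B : Matrix n n R}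
    (hA : ∀ i j, 0 ≤ A i j) (hB : ∀ i j, 0 ≤ B i j) (hAB : A.posSupport ⊆ B.posSupport)
    (k : ℕ) : (A ^ k).posSupport ⊆ (B ^ k).posSupport := by
  induction k with
  | zero => exact subset_rfl
  | succ k ih =>
    simpa only [pow_succ] using
      posSupport_mul_subset_mul (pow_apply_nonneg hA k) hA (pow_apply_nonneg hB k) hB ih hAB

lemma mem_posSupport_kronecker {A : Matrix l m R} {B : Matrix l' n' R}
    (hA : ∀ i j, 0 ≤ A i j) (hB : ∀ i j, 0 ≤ B i j) {i : l} {j : m} {i' : l'} {j' : n'} :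
    ((i, i'), (j, j')) ∈ (A ⊗ₖ B).posSupport ↔
      (i, j) ∈ A.posSupport ∧ (i', j') ∈ B.posSupport := by
  simp only [mem_posSupport, kronecker_apply]
  exact ⟨fun h => ⟨pos_of_mul_pos_left h (hB i' j'), pos_of_mul_pos_right h (hA i j)⟩,
    fun h => mul_pos h.1 h.2⟩

lemma kronecker_nonneg {A : Matrix l m R} {B : Matrix l' n' R}
    (hA : ∀ i j, 0 ≤ A i j) (hB : ∀ i j, 0 ≤ B i j) : ∀ i j, 0 ≤ (A ⊗ₖ B) i j :=
  fun i j => mul_nonneg (hA i.1 j.1) (hB i.2 j.2)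

lemma mem_posSupport_one [DecidableEq n] {i j : n} :
    (i, j) ∈ (1 : Matrix n n R).posSupport ↔ i = j := by
  by_cases h : i = j <;> simp [h]

lemma sum_smul_apply_nonneg [Fintype ι] {p : ι → R} {C : ι → Matrix m n R}
    (hp : ∀ k, 0 ≤ p k) (hC : ∀ k i j, 0 ≤ C k i j) (i : m) (j : n) :
    0 ≤ (∑ k, p k • C k) i j := by
  simp only [sum_apply, smul_apply, smul_eq_mul]
  exact Finset.sum_nonneg fun k _ => mul_nonneg (hp k) (hC k i j)

lemma mem_posSupport_sum_smul [Fintype ι] {p : ι → R} {C : ι → Matrix m n R}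
    (hp : ∀ k, 0 < p k) (hC : ∀ k i j, 0 ≤ C k i j) {i : m} {j : n} :
    (i, j) ∈ (∑ k, p k • C k).posSupport ↔ ∃ k, (i, j) ∈ (C k).posSupport := by
  simp only [mem_posSupport, sum_apply, smul_apply, smul_eq_mul]
  rw [Finset.sum_pos_iff_of_nonneg fun k _ => mul_nonneg (hp k).le (hC k i j)]
  simp only [Finset.mem_univ, true_and, mul_pos_iff_of_pos_left (hp _)]

section Average

variable [Fintype ι] {p : ι → R} {K : ι → Matrix n n R}

lemma posSupport_sum_smul_kronecker_subset (hp : ∀ k, 0 < p k) (hK : ∀ k i j, 0 ≤ K k i j) :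
    (∑ k, p k • (K k ⊗ₖ K k)).posSupport ⊆
      ((∑ k, p k • K k) ⊗ₖ (∑ k, p k • K k)).posSupport := by
  have hA := sum_smul_apply_nonneg (fun k => (hp k).le) hK
  rintro ⟨⟨i, i'⟩, ⟨j, j'⟩⟩ h
  obtain ⟨k, hk⟩ := (mem_posSupport_sum_smul hp fun k => kronecker_nonneg (hK k) (hK k)).1 h
  obtain ⟨hij, hij'⟩ := (mem_posSupport_kronecker (hK k) (hK k)).1 hk
  exact (mem_posSupport_kronecker hA hA).2
    ⟨(mem_posSupport_sum_smul hp hK).2 ⟨k, hij⟩, (mem_posSupport_sum_smul hp hK).2 ⟨k, hij'⟩⟩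

lemma posSupport_sum_smul_kronecker_one_subset [DecidableEq n] (hp : ∀ k, 0 < p k)
    (hK : ∀ k i j, 0 ≤ K k i j) (hdiag : ∀ k i, 0 < K k i i) :
    ((∑ k, p k • K k) ⊗ₖ (1 : Matrix n n R)).posSupport ⊆
      (∑ k, p k • (K k ⊗ₖ K k)).posSupport := by
  have hA := sum_smul_apply_nonneg (fun k => (hp k).le) hK
  rintro ⟨⟨i, i'⟩, ⟨j, j'⟩⟩ h
  obtain ⟨hij, hi'j'⟩ := (mem_posSupport_kronecker hA zero_le_one_elem).1 h
  obtain rfl := mem_posSupport_one.1 hi'j'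
  obtain ⟨k, hk⟩ := (mem_posSupport_sum_smul hp hK).1 hij
  exact (mem_posSupport_sum_smul hp fun k => kronecker_nonneg (hK k) (hK k)).2
    ⟨k, (mem_posSupport_kronecker (hK k) (hK k)).2 ⟨hk, hdiag k i'⟩⟩

lemma posSupport_one_kronecker_sum_smul_subset [DecidableEq n] (hp : ∀ k, 0 < p k)
    (hK : ∀ k i j, 0 ≤ K k i j) (hdiag : ∀ k i, 0 < K k i i) :
    ((1 : Matrix n n R) ⊗ₖ (∑ k, p k • K k)).posSupport ⊆
      (∑ k, p k • (K k ⊗ₖ K k)).posSupport := by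
  have hA := sum_smul_apply_nonneg (fun k => (hp k).le) hK
  rintro ⟨⟨i, i'⟩, ⟨j, j'⟩⟩ h
  obtain ⟨hij, hi'j'⟩ := (mem_posSupport_kronecker zero_le_one_elem hA).1 h
  obtain rfl := mem_posSupport_one.1 hij
  obtain ⟨k, hk⟩ := (mem_posSupport_sum_smul hp hK).1 hi'j'
  exact (mem_posSupport_sum_smul hp fun k => kronecker_nonneg (hK k) (hK k)).2
    ⟨k, (mem_posSupport_kronecker (hK k) (hK k)).2 ⟨hdiag k i, hk⟩⟩

variable [Fintype n] [DecidableEq n]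

lemma posSupport_pow_kronecker_pow_subset (hp : ∀ k, 0 < p k) (hK : ∀ k i j, 0 ≤ K k i j)
    (hdiag : ∀ k i, 0 < K k i i) (m : ℕ) :
    (((∑ k, p k • K k) ^ m) ⊗ₖ ((∑ k, p k • K k) ^ m)).posSupport ⊆
      ((∑ k, p k • (K k ⊗ₖ K k)) ^ (2 * m)).posSupport := by
  have hA := sum_smul_apply_nonneg (fun k => (hp k).le) hK
  have hB := sum_smul_apply_nonneg (fun k => (hp k).le) fun k => kronecker_nonneg (hK k) (hK k)
  have hA1 := kronecker_nonneg hA (zero_le_one_elem (α := R) (n := n))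
  have h1A := kronecker_nonneg (zero_le_one_elem (α := R) (n := n)) hA
  have hsplit : ((∑ k, p k • K k) ^ m) ⊗ₖ ((∑ k, p k • K k) ^ m) =
      ((∑ k, p k • K k) ⊗ₖ (1 : Matrix n n R)) ^ m *
        ((1 : Matrix n n R) ⊗ₖ (∑ k, p k • K k)) ^ m := by
    rw [kronecker_pow, kronecker_pow, one_pow, ← mul_kronecker_mul, mul_one, one_mul]
  rw [hsplit, two_mul, pow_add]
  exact posSupport_mul_subset_mul (pow_apply_nonneg hA1 m) (pow_apply_nonneg h1A m)
    (pow_apply_nonneg hB m) (pow_apply_nonneg hB m)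
    (posSupport_pow_subset_pow hA1 hB (posSupport_sum_smul_kronecker_one_subset hp hK hdiag) m)
    (posSupport_pow_subset_pow h1A hB (posSupport_one_kronecker_sum_smul_subset hp hK hdiag) m)

lemma posSupport_pow_sum_smul_kronecker_subset (hp : ∀ k, 0 < p k) (hK : ∀ k i j, 0 ≤ K k i j)
    (m : ℕ) :
    ((∑ k, p k • (K k ⊗ₖ K k)) ^ m).posSupport ⊆
      (((∑ k, p k • K k) ^ m) ⊗ₖ ((∑ k, p k • K k) ^ m)).posSupport := by
  have hA := sum_smul_apply_nonneg (fun k => (hp k).le) hK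
  rw [← kronecker_pow]
  exact posSupport_pow_subset_pow
    (sum_smul_apply_nonneg (fun k => (hp k).le) fun k => kronecker_nonneg (hK k) (hK k))
    (kronecker_nonneg hA hA) (posSupport_sum_smul_kronecker_subset hp hK) m

end Average

end Matrix

theorem stmt0_general {N M : ℕ}
    (K : Fin M → Matrix (Fin N) (Fin N) ℝ)
    (hK : ∀ k, RowStochastic (K k))
    (hdiag : ∀ k i, 0 < K k i i)
    (p : Fin M → ℝ) (hp : ∀ k, 0 < p k) :
    _root_.IsPrimitive (∑ k, p k • K k) ↔ _root_.IsPrimitive (∑ k, p k • (K k ⊗ₖ K k)) := by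
  have hKnn : ∀ k i j, 0 ≤ K k i j := fun k => (hK k).1
  have hA := sum_smul_apply_nonneg (fun k => (hp k).le) hKnn
  constructor
  · rintro ⟨m, hm, hpos⟩
    refine ⟨2 * m, by omega, fun ⟨i, i'⟩ ⟨j, j'⟩ => ?_⟩
    exact posSupport_pow_kronecker_pow_subset hp hKnn hdiag m <|
      (mem_posSupport_kronecker (pow_apply_nonneg hA m) (pow_apply_nonneg hA m)).2
        ⟨hpos i j, hpos i' j'⟩
  · rintro ⟨m, hm, hpos⟩
    refine ⟨m, hm, fun i j => ?_⟩
    have hij := posSupport_pow_sum_smul_kronecker_subset hp hKnn m <|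
      mem_posSupport.2 (hpos (i, i) (j, j))
    exact ((mem_posSupport_kronecker (pow_apply_nonneg hA m) (pow_apply_nonneg hA m)).1 hij).1

theorem stmt0 {N M : ℕ} (hN : 1 ≤ N) (hM : 1 ≤ M)
    (K : Fin M → Matrix (Fin N) (Fin N) ℝ)
    (hK : ∀ k, RowStochastic (K k))
    (hdiag : ∀ k i, 0 < K k i i)
    (p : Fin M → ℝ) (hp : ∀ k, 0 < p k) (hpsum : ∑ k, p k = 1) :
    _root_.IsPrimitive (∑ k, p k • K k) ↔ _root_.IsPrimitive (∑ k, p k • (K k ⊗ₖ K k)) :=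
  stmt0_general K hK hdiag p hp
end

section
/- Let 𝒦 = {K₁, …, K_M} be a finite set of row-stochastic N×N real matrices, each with strictly positive diagonal entries, and let p₁, …, p_M be strictly positive reals summing to 1. Then Σᵢ pᵢKᵢ is primitive if and only if there exist an integer L with 1 ≤ L < 2N² and indices k₁, …, k_L ∈ {1,…,M} such that all entries of the product K_{k₁}K_{k₂}⋯K_{k_L} are strictly positive. -/
open Matrix Kronecker Finset

/-!
The positive entries of `T = ∑ pₖ Kₖ` are those of the `Kₖ` taken together, so `(T ^ m) i j > 0`
exactly when some word of length `m` in the `Kₖ` has a positive `(i, j)` entry; this gives one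
direction. For the other, the positive diagonal makes the supports of the rows of `T ^ t` grow
with `t`, and they stop growing once they fail to grow in one step, so a primitive `T` already has
`T ^ (N - 1) > 0`. Concatenating words of length `N - 1` that lead from every `i` to a fixed index
`c`, and then words leading from `c` to every `j`, gives an entrywise positive word of length
`2N(N - 1) + 1 < 2N²`: factors with positive diagonal never destroy a positive entry.
-/

open Function

section Iterate

variable {α : Type*} {f : Finset α → Finset α}

theorem Finset.card_add_le_card_iterate_or_isFixedPt (hf : ∀ s, s ⊆ f s) (s : Finset α)
    (k : ℕ) : #s + k ≤ #(f^[k] s) ∨ IsFixedPt f (f^[k] s) := by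
  induction k with
  | zero => exact .inl le_rfl
  | succ k ih =>
    rw [iterate_succ_apply']
    by_cases hfix : IsFixedPt f (f^[k] s)
    · rw [hfix.eq]
      exact .inr hfix
    · have hlt := card_lt_card ((hf _).ssubset_of_ne (Ne.symm hfix))
      rcases ih with ih | ih
      · exact .inl (by omega)
      · exact absurd ih hfix

theorem Finset.isFixedPt_iterate_card_sub [Fintype α] (hf : ∀ s, s ⊆ f s) (s : Finset α) :
    IsFixedPt f (f^[Fintype.card α - #s] s) := by
  rcases card_add_le_card_iterate_or_isFixedPt hf s (Fintype.card α - #s) with hcard | hfix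
  · have huniv : f^[Fintype.card α - #s] s = univ := by
      have := card_le_univ s
      exact eq_univ_of_card _ (le_antisymm (card_le_univ _) (by omega))
    rw [huniv]
    exact (subset_univ _).antisymm (hf _)
  · exact hfix

theorem Finset.iterate_subset_iterate_card_sub [Fintype α] (hf : ∀ s, s ⊆ f s) (s : Finset α)
    (t : ℕ) :
    f^[t] s ⊆ f^[Fintype.card α - #s] s :=
  calc f^[t] s ⊆ f^[t + (Fintype.card α - #s)] s :=
        monotone_iterate_of_id_le (fun s => hf s) (Nat.le_add_right _ _) s
    _ = f^[Fintype.card α - #s] s := by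
      rw [iterate_add_apply, ((isFixedPt_iterate_card_sub hf s).iterate t).eq]

end Iterate

namespace Matrix

variable {n R : Type*} [Fintype n] [DecidableEq n] [Semiring R] [LinearOrder R]
  [IsStrictOrderedRing R]

def nonnegSubmonoid : Submonoid (Matrix n n R) where
  carrier := {A | ∀ i j, 0 ≤ A i j}
  one_mem' i j := by by_cases h : i = j <;> simp [one_apply, h]
  mul_mem' hA hB i j := sum_nonneg fun a _ => mul_nonneg (hA i a) (hB a j)

theorem mul_apply_pos_iff {A B : Matrix n n R} (hA : A ∈ nonnegSubmonoid)
    (hB : B ∈ nonnegSubmonoid) {i j : n} :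
    0 < (A * B) i j ↔ ∃ a, 0 < A i a ∧ 0 < B a j := by
  rw [mul_apply, sum_pos_iff_of_nonneg fun a _ => mul_nonneg (hA i a) (hB a j)]
  simp only [mem_univ, true_and]
  refine exists_congr fun a => ⟨fun h => ?_, fun h => mul_pos h.1 h.2⟩
  exact (pos_and_pos_or_neg_and_neg_of_mul_pos h).resolve_right fun h' => (hA i a).not_gt h'.1

def nonnegPosDiagSubmonoid : Submonoid (Matrix n n R) where
  carrier := {A | A ∈ nonnegSubmonoid ∧ ∀ i, 0 < A i i}
  one_mem' := ⟨one_mem _, fun i => by simp⟩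
  mul_mem' hA hB :=
    ⟨mul_mem hA.1 hB.1, fun i => (mul_apply_pos_iff hA.1 hB.1).2 ⟨i, hA.2 i, hB.2 i⟩⟩

theorem list_prod_apply_pos_of_mem {l : List (Matrix n n R)}
    (hl : ∀ B ∈ l, B ∈ nonnegPosDiagSubmonoid) {A : Matrix n n R} (hA : A ∈ l) {i j : n}
    (h : 0 < A i j) : 0 < l.prod i j := by
  induction l with
  | nil => simp at hA
  | cons B l ih =>
    have hB := hl B List.mem_cons_self
    have hl' : ∀ C ∈ l, C ∈ nonnegPosDiagSubmonoid :=
      fun C hC => hl C (List.mem_cons_of_mem _ hC)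
    have hprod := nonnegPosDiagSubmonoid.list_prod_mem hl'
    rw [List.prod_cons, mul_apply_pos_iff hB.1 hprod.1]
    rcases List.mem_cons.1 hA with rfl | hA
    · exact ⟨j, h, hprod.2 j⟩
    · exact ⟨i, hB.2 i, ih hl' hA⟩

theorem pow_card_sub_one_apply_pos {T : Matrix n n R} (hT : T ∈ nonnegPosDiagSubmonoid)
    (hprim : ∃ m, ∀ i j, 0 < (T ^ m) i j) (i j : n) :
    0 < (T ^ (Fintype.card n - 1)) i j := by
  let step : Finset n → Finset n := fun s => {b | ∃ a ∈ s, 0 < T a b}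
  have hstep : ∀ s, s ⊆ step s := fun s a ha => by simpa [step] using ⟨a, ha, hT.2 a⟩
  have hreach : ∀ t b, b ∈ step^[t] {i} ↔ 0 < (T ^ t) i b := by
    intro t
    induction t with
    | zero => intro b; by_cases h : i = b <;> simp [h, eq_comm]
    | succ t ih =>
      intro b
      simp only [iterate_succ_apply', step, mem_filter, mem_univ, true_and, ih, pow_succ,
        mul_apply_pos_iff (pow_mem hT.1 t) hT.1]
  obtain ⟨m, hm⟩ := hprim
  have hsub := iterate_subset_iterate_card_sub hstep {i} m
  rw [card_singleton] at hsub
  exact (hreach _ j).1 (hsub ((hreach m j).2 (hm i j)))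

variable {ι : Type*}

theorem sum_smul_mem_nonnegSubmonoid [Fintype ι] {K : ι → Matrix n n R}
    (hK : ∀ k, K k ∈ nonnegSubmonoid) {p : ι → R} (hp : ∀ k, 0 ≤ p k) :
    ∑ k, p k • K k ∈ nonnegSubmonoid := fun i j => by
  simp only [sum_apply, smul_apply, smul_eq_mul]
  exact sum_nonneg fun k _ => mul_nonneg (hp k) (hK k i j)

theorem sum_smul_apply_pos_iff [Fintype ι] {K : ι → Matrix n n R}
    (hK : ∀ k, K k ∈ nonnegSubmonoid) {p : ι → R} (hp : ∀ k, 0 < p k) (i j : n) :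
    0 < (∑ k, p k • K k) i j ↔ ∃ k, 0 < K k i j := by
  simp only [sum_apply, smul_apply, smul_eq_mul]
  rw [sum_pos_iff_of_nonneg fun k _ => mul_nonneg (hp k).le (hK k i j)]
  simp [mul_pos_iff_of_pos_left (hp _)]

theorem pow_apply_pos_iff_exists_word {K : ι → Matrix n n R} {T : Matrix n n R}
    (hK : ∀ k, K k ∈ nonnegSubmonoid) (hT : T ∈ nonnegSubmonoid)
    (hpat : ∀ i j, 0 < T i j ↔ ∃ k, 0 < K k i j) (m : ℕ) (i j : n) :
    0 < (T ^ m) i j ↔ ∃ w : List ι, w.length = m ∧ 0 < (w.map K).prod i j := by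
  have hword : ∀ w : List ι, (w.map K).prod ∈ nonnegSubmonoid := fun w =>
    list_prod_mem (by simpa using fun k _ => hK k)
  induction m generalizing i with
  | zero => simp [List.length_eq_zero_iff]
  | succ m ih =>
    rw [pow_succ', mul_apply_pos_iff hT (pow_mem hT m)]
    simp only [hpat, ih]
    constructor
    · rintro ⟨a, ⟨k, hk⟩, w, rfl, hw⟩
      refine ⟨k :: w, rfl, ?_⟩
      rw [List.map_cons, List.prod_cons, mul_apply_pos_iff (hK k) (hword w)]
      exact ⟨a, hk, hw⟩
    · rintro ⟨_ | ⟨k, w⟩, hlen, hw⟩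
      · simp at hlen
      · rw [List.map_cons, List.prod_cons, mul_apply_pos_iff (hK k) (hword w)] at hw
        obtain ⟨a, hk, hw⟩ := hw
        exact ⟨a, ⟨k, hk⟩, w, by simpa using hlen, hw⟩

theorem exists_word_forall_apply_pos {α : Type*} [Fintype α] {K : ι → Matrix n n R}
    (hK : ∀ k, K k ∈ nonnegPosDiagSubmonoid) {u v : α → n} {d : ℕ}
    (hword : ∀ x, ∃ w : List ι, w.length = d ∧ 0 < (w.map K).prod (u x) (v x)) :
    ∃ w : List ι, w.length = Fintype.card α * d ∧ ∀ x, 0 < (w.map K).prod (u x) (v x) := by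
  choose g hlen hpos using hword
  refine ⟨univ.toList.flatMap g, by simp [List.length_flatMap, hlen], fun x => ?_⟩
  rw [List.map_flatMap, List.flatMap_def, List.prod_flatten, List.map_map]
  refine list_prod_apply_pos_of_mem ?_ (List.mem_map.2 ⟨x, by simp, rfl⟩) (hpos x)
  simp only [List.mem_map, forall_exists_index, and_imp, forall_apply_eq_imp_iff₂]
  exact fun y _ => list_prod_mem (by simpa using fun k _ => hK k)

theorem exists_word_length_eq_forall_apply_pos {K : ι → Matrix n n R} {T : Matrix n n R}
    (hK : ∀ k, K k ∈ nonnegPosDiagSubmonoid) (hT : T ∈ nonnegSubmonoid)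
    (hpat : ∀ i j, 0 < T i j ↔ ∃ k, 0 < K k i j) (hprim : ∃ m, ∀ i j, 0 < (T ^ m) i j)
    (k₀ : ι) (c : n) :
    ∃ w : List ι, w.length = 2 * Fintype.card n * (Fintype.card n - 1) + 1 ∧
      ∀ i j, 0 < (w.map K).prod i j := by
  have hTdiag : T ∈ nonnegPosDiagSubmonoid := ⟨hT, fun i => (hpat i i).2 ⟨k₀, (hK k₀).2 i⟩⟩
  have hword i j := (pow_apply_pos_iff_exists_word (fun k => (hK k).1) hT hpat _ i j).1
    (pow_card_sub_one_apply_pos hTdiag hprim i j)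
  obtain ⟨U, hUlen, hU⟩ := exists_word_forall_apply_pos hK (u := id) (v := fun _ => c)
    fun i => hword i c
  obtain ⟨V, hVlen, hV⟩ := exists_word_forall_apply_pos hK (u := fun _ => c) (v := id)
    fun j => hword c j
  have hprod (w : List ι) : (w.map K).prod ∈ nonnegSubmonoid :=
    (nonnegPosDiagSubmonoid.list_prod_mem (by simpa using fun k _ => hK k)).1
  -- the factor `K k₀` only makes the word nonempty when `n` has a single element
  refine ⟨U ++ V ++ [k₀], by simp [hUlen, hVlen]; ring, fun i j => ?_⟩
  rw [List.map_append, List.map_append, List.prod_append, List.prod_append, List.map_singleton,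
    List.prod_singleton, mul_apply_pos_iff (mul_mem (hprod U) (hprod V)) (hK k₀).1]
  exact ⟨j, (mul_apply_pos_iff (hprod U) (hprod V)).2 ⟨c, hU i, hV j⟩, (hK k₀).2 j⟩

end Matrix

theorem stmt1_general {N M : ℕ} (hN : 1 ≤ N) (hM : 1 ≤ M)
    (K : Fin M → Matrix (Fin N) (Fin N) ℝ)
    (hK : ∀ k, RowStochastic (K k))
    (hdiag : ∀ k i, 0 < K k i i)
    (p : Fin M → ℝ) (hp : ∀ k, 0 < p k) :
    _root_.IsPrimitive (∑ k, p k • K k) ↔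
      ∃ L : ℕ, 1 ≤ L ∧ L < 2 * N ^ 2 ∧
        ∃ f : Fin L → Fin M, ∀ i j, 0 < ((List.ofFn fun s => K (f s)).prod) i j := by
  have hKnn (k : Fin M) : K k ∈ nonnegSubmonoid := (hK k).1
  have hT := sum_smul_mem_nonnegSubmonoid hKnn fun k => (hp k).le
  have hpat := sum_smul_apply_pos_iff hKnn hp
  constructor
  · rintro ⟨m, -, hm⟩
    obtain ⟨w, hlen, hw⟩ := exists_word_length_eq_forall_apply_pos (fun k => ⟨hKnn k, hdiag k⟩)
      hT hpat ⟨m, hm⟩ ⟨0, hM⟩ ⟨0, hN⟩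
    rw [Fintype.card_fin] at hlen
    refine ⟨w.length, by omega, ?_, fun s => w[s], by simpa [List.ofFn_getElem_eq_map] using hw⟩
    obtain ⟨N, rfl⟩ := Nat.exists_eq_add_of_le' hN
    rw [hlen]
    simp only [Nat.add_sub_cancel]
    nlinarith
  · rintro ⟨L, hL, -, f, hf⟩
    exact ⟨L, hL, fun i j => (pow_apply_pos_iff_exists_word hKnn hT hpat L i j).2
      ⟨List.ofFn f, List.length_ofFn, by rw [List.map_ofFn]; exact hf i j⟩⟩

theorem stmt1 {N M : ℕ} (hN : 1 ≤ N) (hM : 1 ≤ M)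
    (K : Fin M → Matrix (Fin N) (Fin N) ℝ)
    (hK : ∀ k, RowStochastic (K k))
    (hdiag : ∀ k i, 0 < K k i i)
    (p : Fin M → ℝ) (hp : ∀ k, 0 < p k) (hpsum : ∑ k, p k = 1) :
    _root_.IsPrimitive (∑ k, p k • K k) ↔
      ∃ L : ℕ, 1 ≤ L ∧ L < 2 * N ^ 2 ∧
        ∃ f : Fin L → Fin M, ∀ i j, 0 < ((List.ofFn fun s => K (f s)).prod) i j :=
  stmt1_general hN hM K hK hdiag p hp
end

section
/- Let N ≥ 1, let x(0) ∈ ℝᴺ, and set x_ave = (1/N)𝟙ᵀx(0). Let P be an N×N real matrix such that the vector w = Pᵀ𝟙 has all entries strictly positive, set s = Pᵀx(0), and define x ∈ ℝᴺ by xᵢ = sᵢ/wᵢ. Then Σᵢ₌₁ᴺ (xᵢ − x_ave)² ≤ Ψ₁ · Ψ₂, where Ψ₁ = ‖x(0)‖₂² / (min_k w_k)² and Ψ₂ = ‖(I−J)P‖_F². -/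
open Matrix Finset

/-- `J = (1/N) 𝟙 𝟙ᵀ`, the `N × N` averaging matrix. -/
noncomputable def Jmat (N : ℕ) : Matrix (Fin N) (Fin N) ℝ :=
  Matrix.of fun _ _ => (N : ℝ)⁻¹

theorem stmt4 {N : ℕ} (hN : 1 ≤ N)
    (x0 : Fin N → ℝ)
    (xave : ℝ) (hxave : xave = (N : ℝ)⁻¹ * ∑ i, x0 i)
    (P : Matrix (Fin N) (Fin N) ℝ)
    (w : Fin N → ℝ) (hw : w = fun j => ∑ i, P i j)  -- w = Pᵀ𝟙
    (hwpos : ∀ j, 0 < w j)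
    (s : Fin N → ℝ) (hs : s = fun j => ∑ i, P i j * x0 i)  -- s = Pᵀ x(0)
    (x : Fin N → ℝ) (hx : x = fun i => s i / w i)
    (Ψ₁ Ψ₂ : ℝ)
    (hΨ₁ : Ψ₁ = (∑ i, x0 i ^ 2) / (⨅ k, w k) ^ 2)
    (hΨ₂ : Ψ₂ = ∑ i, ∑ j, ((1 - Jmat N) * P) i j ^ 2) :
    ∑ i, (x i - xave) ^ 2 ≤ Ψ₁ * Ψ₂ := by
  haveI : Nonempty (Fin N) := ⟨⟨0, hN⟩⟩
  set A : Matrix (Fin N) (Fin N) ℝ := (1 - Jmat N) * P with hA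
  set m : ℝ := ⨅ k, w k with hm
  have hm_le : ∀ i, m ≤ w i := fun i => ciInf_le (Finite.bddBelow_range w) i
  have hm_pos : 0 < m := by
    obtain ⟨k, -, hk⟩ := Finset.exists_min_image Finset.univ w ⟨⟨0, hN⟩, Finset.mem_univ _⟩
    exact lt_of_lt_of_le (hwpos k) (le_ciInf fun i => hk i (Finset.mem_univ i))
  have hAentry : ∀ k j, A k j = P k j - (N : ℝ)⁻¹ * w j := by
    intro k j
    simp only [hA, Matrix.mul_apply, Matrix.sub_apply, Matrix.one_apply, Jmat, Matrix.of_apply,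
      sub_mul, Finset.sum_sub_distrib, ite_mul, one_mul, zero_mul,
      Finset.sum_ite_eq, Finset.mem_univ, if_true, hw, ← Finset.mul_sum]
  have key : ∀ i, s i - xave * w i = ∑ k, A k i * x0 k := by
    intro i
    simp only [hAentry, sub_mul, Finset.sum_sub_distrib, hs, hxave, hw, mul_assoc,
      ← Finset.mul_sum]
    ring
  calc ∑ i, (x i - xave) ^ 2
      = ∑ i, (∑ k, A k i * x0 k) ^ 2 / (w i) ^ 2 := by
        refine Finset.sum_congr rfl fun i _ => ?_
        rw [← key i, hx]
        field_simp [(hwpos i).ne']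
    _ ≤ ∑ i, ((∑ k, (A k i) ^ 2) * ∑ k, (x0 k) ^ 2) / m ^ 2 := by
        refine Finset.sum_le_sum fun i _ => ?_
        have h1 : (∑ k, A k i * x0 k) ^ 2 ≤ (∑ k, (A k i) ^ 2) * ∑ k, (x0 k) ^ 2 :=
          Finset.sum_mul_sq_le_sq_mul_sq Finset.univ _ _
        have h2 : m ^ 2 ≤ (w i) ^ 2 := by
          have := hm_le i
          nlinarith [hm_pos]
        calc (∑ k, A k i * x0 k) ^ 2 / (w i) ^ 2
            ≤ (∑ k, A k i * x0 k) ^ 2 / m ^ 2 := by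
              apply div_le_div_of_nonneg_left (by positivity) (by positivity) h2
          _ ≤ ((∑ k, (A k i) ^ 2) * ∑ k, (x0 k) ^ 2) / m ^ 2 := by
              apply div_le_div_of_nonneg_right h1 (by positivity)
    _ = Ψ₁ * Ψ₂ := by
        rw [hΨ₁, hΨ₂]
        rw [Finset.sum_comm (f := fun i j => (A i j) ^ 2)]
        rw [← Finset.sum_div, ← Finset.sum_mul]
        ring
end

section
/- Let 𝒦 = {K₁, …, K_M} be a finite set of row-stochastic N×N real matrices and let p₁, …, p_M be strictly positive reals summing to 1. Define E[Ψ₂(t)] = Σ_{(k₁,…,k_t) ∈ {1,…,M}^t} p_{k₁}⋯p_{k_t} · ‖(I−J)K_{k₁}⋯K_{k_t}‖_F² and R = ((I−J) ⊗ (I−J)) · Σᵢ pᵢ (Kᵢ ⊗ Kᵢ). Then for every real η > ρ(R) there exists a constant C > 0 such that E[Ψ₂(t)] ≤ C·η^t for all integers t ≥ 1. -/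
open Matrix Kronecker Finset

/-- The spectral radius of a real square matrix: the maximum modulus of its
complex eigenvalues. -/
noncomputable def specRad {n : Type*} [Fintype n] [DecidableEq n]
    (A : Matrix n n ℝ) : ℝ :=
  (spectralRadius ℂ (A.map Complex.ofReal)).toReal

/-! Since `K * J = J` for a row-stochastic `K`, the projection `1 - J` may be inserted between
consecutive factors, so `(1 - J) K_{k₁} ⋯ K_{k_t}` is the product of the `(1 - J) K_{kᵢ}`. Its
Kronecker square, weighted by `p_{k₁} ⋯ p_{k_t}`, is then the product of the
`p_{kᵢ} • ((1 - J) K_{kᵢ} ⊗ (1 - J) K_{kᵢ})`, and summing over all words gives `R ^ t` (for `t ≥ 1`). Hence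
`E[Ψ₂(t)]` is a sum of `N²` entries of `R ^ t`, each `O(η ^ t)` by Gelfand's formula. -/

section Expansion

variable {A : Type*} [Semiring A]

theorem sum_pow_eq_sum_prod_ofFn {ι : Type*} [Fintype ι] (a : ι → A) :
    ∀ t : ℕ, (∑ k, a k) ^ t = ∑ f : Fin t → ι, (List.ofFn fun s => a (f s)).prod
  | 0 => by simp
  | t + 1 => by
    rw [pow_succ', sum_pow_eq_sum_prod_ofFn a t, sum_mul_sum, ← Fintype.sum_prod_type']
    refine Fintype.sum_equiv (Fin.consEquiv fun _ => ι) _ _ fun ⟨k, f⟩ => ?_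
    simp [List.ofFn_succ]

theorem prod_ofFn_mul_left_of_mul_mul_self {b : A} :
    ∀ {t : ℕ} (a : Fin (t + 1) → A), (∀ s, b * a s * b = b * a s) →
      (List.ofFn fun s => b * a s).prod = b * (List.ofFn a).prod
  | 0, a, _ => by simp
  | t + 1, a, ha => by
    rw [List.ofFn_succ (f := fun s => b * a s), List.prod_cons,
      prod_ofFn_mul_left_of_mul_mul_self _ fun s => ha s.succ, ← mul_assoc, ha 0,
      List.ofFn_succ (f := a), List.prod_cons]
    simp only [mul_assoc]

end Expansion

theorem prod_ofFn_smul_kronecker {α ι : Type*} [CommSemiring α] [Fintype ι] [DecidableEq ι] :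
    ∀ {t : ℕ} (c : Fin t → α) (A B : Fin t → Matrix ι ι α),
      (List.ofFn fun s => c s • (A s ⊗ₖ B s)).prod
        = (∏ s, c s) • ((List.ofFn A).prod ⊗ₖ (List.ofFn B).prod)
  | 0, _, _, _ => by simp
  | t + 1, c, A, B => by
    simp only [List.ofFn_succ, List.prod_cons, Fin.prod_univ_succ,
      prod_ofFn_smul_kronecker (fun s => c s.succ), smul_mul_smul_comm, mul_kronecker_mul]

section Averaging

variable {N : ℕ} {K : Matrix (Fin N) (Fin N) ℝ}

theorem RowStochastic.mul_Jmat (hK : RowStochastic K) : K * Jmat N = Jmat N := by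
  ext i j
  simp only [Jmat, mul_apply, of_apply, ← sum_mul, hK.2 i, one_mul]

theorem rowStochastic_Jmat : RowStochastic (Jmat N) := by
  refine ⟨fun _ _ => by simp [Jmat], fun i => ?_⟩
  have hN : (N : ℝ) ≠ 0 := Nat.cast_ne_zero.mpr (Fin.pos i).ne'
  simp [Jmat, hN]

theorem Jmat_mul_self : Jmat N * Jmat N = Jmat N :=
  rowStochastic_Jmat.mul_Jmat

theorem RowStochastic.one_sub_Jmat_mul_mul_one_sub_Jmat (hK : RowStochastic K) :
    (1 - Jmat N) * K * (1 - Jmat N) = (1 - Jmat N) * K := by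
  have hJ : (1 - Jmat N) * Jmat N = 0 := by rw [sub_mul, one_mul, Jmat_mul_self, sub_self]
  rw [mul_sub, mul_one, mul_assoc, hK.mul_Jmat, hJ, sub_zero]

end Averaging

theorem sum_prod_mul_sum_sq_eq_sum_pow_apply {N M : ℕ} (K : Fin M → Matrix (Fin N) (Fin N) ℝ)
    (hK : ∀ k, RowStochastic (K k)) (p : Fin M → ℝ)
    {R : Matrix (Fin N × Fin N) (Fin N × Fin N) ℝ}
    (hR : R = ((1 - Jmat N) ⊗ₖ (1 - Jmat N)) * ∑ k, p k • (K k ⊗ₖ K k)) (t : ℕ) :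
    ∑ f : Fin (t + 1) → Fin M, (∏ s, p (f s)) *
        ∑ i, ∑ j, (((1 - Jmat N) * (List.ofFn fun s => K (f s)).prod) i j) ^ 2
      = ∑ i, ∑ j, (R ^ (t + 1)) (i, i) (j, j) := by
  set Q : Fin M → Matrix (Fin N) (Fin N) ℝ := fun k => (1 - Jmat N) * K k
  have hRQ : R = ∑ k, p k • (Q k ⊗ₖ Q k) := by
    simp only [hR, mul_sum, mul_smul_comm, ← mul_kronecker_mul, Q]
  have hQ (f : Fin (t + 1) → Fin M) :
      (List.ofFn fun s => Q (f s)).prod = (1 - Jmat N) * (List.ofFn fun s => K (f s)).prod :=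
    prod_ofFn_mul_left_of_mul_mul_self _ fun s => (hK (f s)).one_sub_Jmat_mul_mul_one_sub_Jmat
  rw [hRQ, sum_pow_eq_sum_prod_ofFn]
  simp only [prod_ofFn_smul_kronecker, hQ, Matrix.sum_apply, Matrix.smul_apply,
    kroneckerMap_apply, smul_eq_mul, mul_sum, sq]
  rw [sum_comm]
  exact sum_congr rfl fun i _ => sum_comm

section Growth

open Filter Asymptotics

theorem spectralRadius_ne_top {𝕜 A : Type*} [NormedField 𝕜] [NormedRing A] [NormedAlgebra 𝕜 A]
    [CompleteSpace A] (a : A) : spectralRadius 𝕜 a ≠ ⊤ := by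
  refine ne_top_of_le_ne_top ?_ (spectrum.spectralRadius_le_pow_nnnorm_pow_one_div 𝕜 a 0)
  simp [← ENNReal.coe_mul]

theorem exists_norm_pow_le_of_spectralRadius_lt {A : Type*} [NormedRing A] [NormedAlgebra ℂ A]
    [CompleteSpace A] (a : A) {η : ℝ} (hη : (spectralRadius ℂ a).toReal < η) :
    ∃ C > 0, ∀ t : ℕ, ‖a ^ t‖ ≤ C * η ^ t := by
  have hη₀ : 0 < η := ENNReal.toReal_nonneg.trans_lt hη
  have hlt := (ENNReal.lt_ofReal_iff_toReal_lt (spectralRadius_ne_top a)).mpr hη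
  have hev : ∀ᶠ t : ℕ in atTop, ‖a ^ t‖ ≤ ‖η ^ t‖ := by
    filter_upwards [(spectrum.pow_norm_pow_one_div_tendsto_nhds_spectralRadius a).eventually_lt_const
      hlt, eventually_ne_atTop 0] with t ht ht₀
    rw [ENNReal.ofReal_lt_ofReal_iff hη₀, one_div,
      Real.rpow_inv_lt_iff_of_pos (norm_nonneg _) hη₀.le (by positivity), Real.rpow_natCast] at ht
    rw [Real.norm_of_nonneg (by positivity)]
    exact ht.le
  obtain ⟨C, hC, hbound⟩ := bound_of_isBigO_nat_atTop (IsBigO.of_bound' hev)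
  refine ⟨C, hC, fun t => ?_⟩
  simpa only [norm_pow, Real.norm_of_nonneg hη₀.le] using hbound (pow_pos hη₀ t).ne'

open scoped Matrix.Norms.Operator

theorem norm_apply_le_linfty_opNorm {m n α : Type*} [Fintype m] [Fintype n]
    [SeminormedAddCommGroup α] (X : Matrix m n α) (i : m) (j : n) : ‖X i j‖ ≤ ‖X‖ := by
  have h : ‖X i j‖₊ ≤ ‖X‖₊ := by
    rw [linfty_opNNNorm_def]
    exact (single_le_sum (fun _ _ => zero_le) (mem_univ j)).trans
      (le_sup (f := fun i => ∑ j, ‖X i j‖₊) (mem_univ i))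
  exact_mod_cast h

theorem exists_abs_pow_apply_le_of_specRad_lt {n : Type*} [Fintype n] [DecidableEq n]
    (A : Matrix n n ℝ) {η : ℝ} (hη : specRad A < η) :
    ∃ C > 0, ∀ (t : ℕ) (i j : n), |(A ^ t) i j| ≤ C * η ^ t := by
  obtain ⟨C, hC, hbound⟩ := exists_norm_pow_le_of_spectralRadius_lt (A.map Complex.ofReal) hη
  refine ⟨C, hC, fun t i j => ?_⟩
  have hmap : (A ^ t).map Complex.ofReal = A.map Complex.ofReal ^ t :=
    Matrix.map_pow A Complex.ofRealHom t
  calc |(A ^ t) i j| = ‖(A ^ t).map Complex.ofReal i j‖ := by simp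
    _ ≤ ‖(A ^ t).map Complex.ofReal‖ := norm_apply_le_linfty_opNorm _ i j
    _ ≤ C * η ^ t := hmap ▸ hbound t

end Growth

theorem stmt7_general {N M : ℕ}
    (K : Fin M → Matrix (Fin N) (Fin N) ℝ)
    (hK : ∀ k, RowStochastic (K k))
    (p : Fin M → ℝ)
    (R : Matrix (Fin N × Fin N) (Fin N × Fin N) ℝ)
    (hR : R = ((1 - Jmat N) ⊗ₖ (1 - Jmat N)) * ∑ k, p k • (K k ⊗ₖ K k))
    (EΨ₂ : ℕ → ℝ)
    (hEΨ₂ : ∀ t, EΨ₂ t = ∑ f : Fin t → Fin M, (∏ s, p (f s)) *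
        ∑ i, ∑ j, (((1 - Jmat N) * (List.ofFn fun s => K (f s)).prod) i j) ^ 2) :
    ∀ η : ℝ, specRad R < η → ∃ C : ℝ, 0 < C ∧ ∀ t : ℕ, 1 ≤ t → EΨ₂ t ≤ C * η ^ t := by
  intro η hη
  have hη₀ : 0 < η := ENNReal.toReal_nonneg.trans_lt hη
  obtain ⟨C, hC, hbound⟩ := exists_abs_pow_apply_le_of_specRad_lt R hη
  refine ⟨(N ^ 2 + 1) * C, by positivity, fun t ht => ?_⟩
  obtain ⟨t, rfl⟩ := Nat.exists_eq_add_one.mpr ht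
  have hCη : 0 ≤ C * η ^ (t + 1) := by positivity
  calc EΨ₂ (t + 1) = ∑ i, ∑ j, (R ^ (t + 1)) (i, i) (j, j) := by
        rw [hEΨ₂, sum_prod_mul_sum_sq_eq_sum_pow_apply K hK p hR]
    _ ≤ ∑ _i : Fin N, ∑ _j : Fin N, C * η ^ (t + 1) := by
        gcongr with i _ j
        exact (le_abs_self _).trans (hbound _ _ _)
    _ = N ^ 2 * (C * η ^ (t + 1)) := by simp [sq, mul_assoc]
    _ ≤ (N ^ 2 + 1) * C * η ^ (t + 1) := by nlinarith

theorem stmt7 {N M : ℕ} (hN : 1 ≤ N) (hM : 1 ≤ M)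
    (K : Fin M → Matrix (Fin N) (Fin N) ℝ)
    (hK : ∀ k, RowStochastic (K k))
    (p : Fin M → ℝ) (hp : ∀ k, 0 < p k) (hpsum : ∑ k, p k = 1)
    (R : Matrix (Fin N × Fin N) (Fin N × Fin N) ℝ)
    (hR : R = ((1 - Jmat N) ⊗ₖ (1 - Jmat N)) * ∑ k, p k • (K k ⊗ₖ K k))
    (EΨ₂ : ℕ → ℝ)
    (hEΨ₂ : ∀ t, EΨ₂ t = ∑ f : Fin t → Fin M, (∏ s, p (f s)) *
        ∑ i, ∑ j, (((1 - Jmat N) * (List.ofFn fun s => K (f s)).prod) i j) ^ 2) :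
    ∀ η : ℝ, specRad R < η → ∃ C : ℝ, 0 < C ∧ ∀ t : ℕ, 1 ≤ t → EΨ₂ t ≤ C * η ^ t :=
  stmt7_general K hK p R hR EΨ₂ hEΨ₂
end

section
/- Let 𝒦 = {K₁, …, K_M} be a finite set of row-stochastic N×N real matrices and let p₁, …, p_M be strictly positive reals summing to 1. Set S = Σᵢ pᵢ (Kᵢ ⊗ Kᵢ) and R = ((I−J) ⊗ (I−J)) · S. If there exists a vector v ∈ ℝ^{N²} such that ρ(S − 𝟙_{N²} vᵀ) < 1, where 𝟙_{N²} is the all-ones vector in ℝ^{N²}, then ρ(R) < 1. -/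
/-!
Let `P = I - J` and `Q = P ⊗ P`, an idempotent. Row sums 1 give `K J = J`, hence `P K P = P K`
and `Q S Q = Q S`; and `Q 𝟙 = 0`, so `R = Q T` with `T = S - 𝟙 vᵀ` and `Q T Q = Q T`. Thus `T`
leaves `ker Q` invariant and `Q T` is, up to the zero block on `ker Q`, the map `T` induces on
the quotient by `ker Q`. So every nonzero eigenvalue of `R` is one of `T`, and
`ρ(R) ≤ ρ(T) < 1`.
-/

open Matrix Kronecker Finset

section Spectrum

variable {𝕜 A : Type*}

/- For `z ≠ 0` with `(z - T) * W = 1`, a right inverse of `z - Q T` is `Q W Q + z⁻¹ (1 - Q)`;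
Dedekind-finiteness makes it two-sided. -/
theorem spectrum_mul_subset_insert_zero [Field 𝕜] [Ring A] [Algebra 𝕜 A]
    [IsDedekindFiniteMonoid A] {Q T : A} (hQ : IsIdempotentElem Q) (hQT : Q * T * Q = Q * T) :
    spectrum 𝕜 (Q * T) ⊆ insert 0 (spectrum 𝕜 T) := by
  intro z hz
  rw [Set.mem_insert_iff, or_iff_not_imp_left]
  intro hz0
  contrapose! hz
  rw [spectrum.notMem_iff, Algebra.algebraMap_eq_smul_one] at hz ⊢
  obtain ⟨W, hW⟩ := hz.exists_right_inv
  have on_range : (z • 1 - Q * T) * Q = Q * (z • 1 - T) := by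
    rw [sub_mul, hQT, mul_sub, smul_one_mul, mul_smul_one]
  have on_ker : (z • 1 - Q * T) * (1 - Q) = z • (1 - Q) := by
    rw [mul_sub, mul_one, on_range, mul_sub, mul_smul_one, smul_sub]
    abel
  refine IsUnit.of_mul_eq_one (Q * W * Q + z⁻¹ • (1 - Q)) ?_
  rw [mul_add, mul_smul_comm, on_ker, smul_smul, inv_mul_cancel₀ hz0, one_smul,
    ← mul_assoc, ← mul_assoc, on_range, mul_assoc Q, hW, mul_one, hQ.eq, add_sub_cancel]

variable [NormedField 𝕜] [Ring A] [Algebra 𝕜 A]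

theorem spectralRadius_le_of_subset_insert_zero {a b : A}
    (hab : spectrum 𝕜 a ⊆ insert 0 (spectrum 𝕜 b)) :
    spectralRadius 𝕜 a ≤ spectralRadius 𝕜 b :=
  iSup₂_le fun k hk => (hab hk).elim (fun hk0 => by simp [hk0]) fun hkb =>
    le_iSup₂ (f := fun k (_ : k ∈ spectrum 𝕜 b) => (‖k‖₊ : ENNReal)) k hkb

theorem spectralRadius_ne_top_of_finite {a : A} (ha : (spectrum 𝕜 a).Finite) :
    spectralRadius 𝕜 a ≠ ⊤ := by
  obtain ⟨C, hC⟩ := (ha.image (‖·‖₊)).bddAbove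
  exact ne_top_of_le_ne_top ENNReal.coe_ne_top
    (iSup₂_le fun k hk => ENNReal.coe_le_coe.2 (hC ⟨k, hk, rfl⟩))

end Spectrum

theorem specRad_mul_le_of_isIdempotentElem {n : Type*} [Fintype n] [DecidableEq n]
    {Q T : Matrix n n ℝ} (hQ : IsIdempotentElem Q) (hQT : Q * T * Q = Q * T) :
    specRad (Q * T) ≤ specRad T := by
  let f := (Complex.ofRealHom : ℝ →+* ℂ).mapMatrix (m := n)
  have hfQT : f Q * f T * f Q = f Q * f T := by simpa only [map_mul] using congrArg f hQT
  have hsub := spectrum_mul_subset_insert_zero (𝕜 := ℂ) (hQ.map f) hfQT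
  rw [← map_mul] at hsub
  exact ENNReal.toReal_mono (spectralRadius_ne_top_of_finite (Matrix.finite_spectrum _))
    (spectralRadius_le_of_subset_insert_zero hsub)

theorem isIdempotentElem_Jmat (N : ℕ) : IsIdempotentElem (Jmat N) := by
  ext i j
  have hN : (N : ℝ) ≠ 0 := Nat.cast_ne_zero.2 i.pos.ne'
  simp only [Jmat, mul_apply, of_apply, sum_const, card_univ, Fintype.card_fin, nsmul_eq_mul]
  field_simp

theorem mul_Jmat_of_sum_row_eq_one {N : ℕ} {K : Matrix (Fin N) (Fin N) ℝ}
    (hK : ∀ i, ∑ j, K i j = 1) : K * Jmat N = Jmat N := by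
  ext i j
  simp only [Jmat, mul_apply, of_apply, ← sum_mul, hK i, one_mul]

theorem one_sub_Jmat_mulVec_one (N : ℕ) : (1 - Jmat N) *ᵥ (fun _ => 1) = 0 := by
  rw [sub_mulVec, one_mulVec, sub_eq_zero]
  ext i
  have hN : (N : ℝ) ≠ 0 := Nat.cast_ne_zero.2 i.pos.ne'
  simp [Jmat, mulVec, dotProduct, hN]

theorem one_sub_mul_mul_one_sub_of_mul_eq {R : Type*} [Ring R] {J K : R}
    (hJ : IsIdempotentElem J) (hKJ : K * J = J) : (1 - J) * K * (1 - J) = (1 - J) * K := by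
  rw [mul_one_sub, mul_assoc, hKJ, one_sub_mul J J, hJ.eq, sub_self, sub_zero]

theorem kronecker_mulVec_one {m n : Type*} [Fintype m] [Fintype n]
    (A : Matrix m m ℝ) (B : Matrix n n ℝ) :
    (A ⊗ₖ B) *ᵥ (fun _ => 1) = fun x => (A *ᵥ fun _ => 1) x.1 * (B *ᵥ fun _ => 1) x.2 := by
  ext x
  simp [mulVec, dotProduct, Fintype.sum_prod_type, sum_mul_sum]

theorem stmt8_general {N M : ℕ}
    (K : Fin M → Matrix (Fin N) (Fin N) ℝ)
    (hK : ∀ k, RowStochastic (K k))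
    (p : Fin M → ℝ)
    (S R : Matrix (Fin N × Fin N) (Fin N × Fin N) ℝ)
    (hS : S = ∑ k, p k • (K k ⊗ₖ K k))
    (hR : R = ((1 - Jmat N) ⊗ₖ (1 - Jmat N)) * S)
    (h : ∃ v : Fin N × Fin N → ℝ,
      specRad (S - Matrix.vecMulVec (fun _ => 1) v) < 1) :
    specRad R < 1 := by
  obtain ⟨v, hv⟩ := h
  set Q := (1 - Jmat N) ⊗ₖ (1 - Jmat N)
  have hJ := isIdempotentElem_Jmat N
  have hQ : IsIdempotentElem Q := by
    rw [IsIdempotentElem, ← mul_kronecker_mul, hJ.one_sub.eq]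
  have hQK (k : Fin M) : Q * (K k ⊗ₖ K k) * Q = Q * (K k ⊗ₖ K k) := by
    simp only [Q, ← mul_kronecker_mul,
      one_sub_mul_mul_one_sub_of_mul_eq hJ (mul_Jmat_of_sum_row_eq_one (hK k).2)]
  have hQS : Q * S * Q = Q * S := by
    simp only [hS, mul_sum, sum_mul, Matrix.mul_smul, Matrix.smul_mul, hQK]
  have hQv : Q * vecMulVec (fun _ => 1) v = 0 := by
    have hQ1 : Q *ᵥ (fun _ => 1) = 0 := by
      ext
      simp [Q, kronecker_mulVec_one, one_sub_Jmat_mulVec_one]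
    rw [mul_vecMulVec, hQ1, zero_vecMulVec]
  have hRT : R = Q * (S - vecMulVec (fun _ => 1) v) := by rw [hR, mul_sub, hQv, sub_zero]
  calc specRad R ≤ specRad (S - vecMulVec (fun _ => 1) v) :=
        hRT ▸ specRad_mul_le_of_isIdempotentElem hQ (by rw [mul_sub, hQv, sub_zero, hQS])
    _ < 1 := hv

theorem stmt8 {N M : ℕ} (hN : 1 ≤ N) (hM : 1 ≤ M)
    (K : Fin M → Matrix (Fin N) (Fin N) ℝ)
    (hK : ∀ k, RowStochastic (K k))
    (p : Fin M → ℝ) (hp : ∀ k, 0 < p k) (hpsum : ∑ k, p k = 1)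
    (S R : Matrix (Fin N × Fin N) (Fin N × Fin N) ℝ)
    (hS : S = ∑ k, p k • (K k ⊗ₖ K k))
    (hR : R = ((1 - Jmat N) ⊗ₖ (1 - Jmat N)) * S)
    (h : ∃ v : Fin N × Fin N → ℝ,
      specRad (S - Matrix.vecMulVec (fun _ => 1) v) < 1) :
    specRad R < 1 :=
  stmt8_general K hK p S R hS hR h
end

section
/- Let 𝒦 = {K₁, …, K_M} be a finite set of row-stochastic N×N real matrices, each with strictly positive diagonal entries, let p₁, …, p_M be strictly positive reals summing to 1, and let (K(t))_{t≥1} be an i.i.d. sequence of random matrices on a probability space with ℙ[K(t) = Kᵢ] = pᵢ for each i. Set P(t) = K(1)K(2)⋯K(t) and w(t)ᵀ = 𝟙ᵀP(t). Let m̄ = min{ (Kᵢ)_{jk} : (Kᵢ)_{jk} > 0 } be the smallest strictly positive entry occurring among the matrices of 𝒦, and suppose there exist an integer L ≥ 1 and indices k₁, …, k_L such that all entries of K_{k₁}⋯K_{k_L} are strictly positive. Then, almost surely, the set of times { t ≥ 1 : min_{1≤k≤N} w_k(t) ≥ m̄^L } is infinite; equivalently, Ψ₁(t) := ‖x(0)‖₂²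 / (min_k w_k(t))² satisfies Ψ₁(t) ≤ ‖x(0)‖₂² · m̄^{−2L} for infinitely many t, for any fixed x(0) ∈ ℝᴺ with x(0) ≠ 0. -/
/-!
Cut time into consecutive blocks of length `L`. The events "block `n` reads the word
`k₁ ⋯ k_L`" are independent with a common positive probability, so by the second
Borel–Cantelli lemma almost surely infinitely many blocks read it. If block `n` does, then
`P((n+1)L) = A · K_{k₁} ⋯ K_{k_L}` with `A` row-stochastic. Entries of a product of `L`
matrices with entries in `{0} ∪ [m̄, ∞)` again lie in `{0} ∪ [m̄^L, ∞)`, so all entries of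
the second factor are at least `m̄^L`; averaging its rows with the weights of a row of `A`
keeps that bound, and `w_k((n+1)L)` is a column sum of `P((n+1)L)`.
-/

open Matrix Finset MeasureTheory

open ProbabilityTheory Filter
open scoped ENNReal

theorem List.prod_map_range_add {M : Type*} [Monoid M] (F : ℕ → M) (a b : ℕ) :
    ((List.range (a + b)).map F).prod =
      ((List.range a).map F).prod * (List.ofFn fun s : Fin b => F (a + s)).prod := by
  simp [List.range_add, List.ofFn_eq_pmap, Function.comp_def]

namespace Matrix

variable {n R : Type*} [Fintype n]
  [CommSemiring R] [LinearOrder R] [IsStrictOrderedRing R]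

theorem mul_apply_eq_zero_or_mul_le {A B : Matrix n n R} {a b : R} (ha : 0 ≤ a) (hb : 0 ≤ b)
    (hA : ∀ i j, A i j = 0 ∨ a ≤ A i j) (hB : ∀ i j, B i j = 0 ∨ b ≤ B i j) (i j : n) :
    (A * B) i j = 0 ∨ a * b ≤ (A * B) i j := by
  have hA₀ : ∀ i j, 0 ≤ A i j := fun i j => (hA i j).elim (·.ge) ha.trans
  have hB₀ : ∀ i j, 0 ≤ B i j := fun i j => (hB i j).elim (·.ge) hb.trans
  have hterm : ∀ k, 0 ≤ A i k * B k j := fun k => mul_nonneg (hA₀ i k) (hB₀ k j)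
  by_cases hzero : ∀ k, A i k * B k j = 0
  · exact .inl (Finset.sum_eq_zero fun k _ => hzero k)
  obtain ⟨k, hk⟩ := not_forall.mp hzero
  have haA : a ≤ A i k := (hA i k).resolve_left (left_ne_zero_of_mul hk)
  have hbB : b ≤ B k j := (hB k j).resolve_left (right_ne_zero_of_mul hk)
  exact .inr <| calc
    a * b ≤ A i k * B k j := mul_le_mul haA hbB hb (hA₀ i k)
    _ ≤ (A * B) i j := Finset.single_le_sum (fun k _ => hterm k) (Finset.mem_univ k)

theorem list_prod_apply_eq_zero_or_pow_le [DecidableEq n] {c : R} (hc : 0 ≤ c) :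
    ∀ l : List (Matrix n n R), (∀ A ∈ l, ∀ i j, A i j = 0 ∨ c ≤ A i j) →
      ∀ i j, l.prod i j = 0 ∨ c ^ l.length ≤ l.prod i j
  | [], _, i, j => by
    by_cases h : i = j <;> simp [h]
  | A :: l, hl, i, j => by
    rw [List.prod_cons, List.length_cons, pow_succ']
    exact mul_apply_eq_zero_or_mul_le hc (pow_nonneg hc _) (hl A List.mem_cons_self)
      (list_prod_apply_eq_zero_or_pow_le hc l fun B hB => hl B (List.mem_cons_of_mem A hB)) i j

theorem le_mul_apply_of_mem_rowStochastic [DecidableEq n] {A Q : Matrix n n R}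
    (hA : A ∈ rowStochastic R n) {c : R} (hQ : ∀ j k, c ≤ Q j k) (i k : n) : c ≤ (A * Q) i k :=
  calc c = ∑ j, A i j * c := by rw [← Finset.sum_mul, sum_row_of_mem_rowStochastic hA, one_mul]
    _ ≤ ∑ j, A i j * Q j k := Finset.sum_le_sum fun j _ =>
        mul_le_mul_of_nonneg_left (hQ j k) (nonneg_of_mem_rowStochastic hA)

theorem le_sum_list_prod_range_apply [DecidableEq n] [Nonempty n] {F : ℕ → Matrix n n R}
    (hF : ∀ u, F u ∈ rowStochastic R n) (a b : ℕ) {c : R}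
    (hc : ∀ j k, c ≤ (List.ofFn fun s : Fin b => F (a + s)).prod j k) (k : n) :
    c ≤ ∑ i, ((List.range (a + b)).map F).prod i k := by
  have hA : ((List.range a).map F).prod ∈ rowStochastic R n :=
    Submonoid.list_prod_mem _ (by simp [hF])
  have hAQ : ((List.range (a + b)).map F).prod ∈ rowStochastic R n :=
    Submonoid.list_prod_mem _ (by simp [hF])
  obtain ⟨i₀⟩ := ‹Nonempty n›
  calc c ≤ ((List.range (a + b)).map F).prod i₀ k := by
        rw [List.prod_map_range_add]
        exact le_mul_apply_of_mem_rowStochastic hA hc i₀ k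
    _ ≤ ∑ i, ((List.range (a + b)).map F).prod i k :=
        single_le_sum (f := fun i => ((List.range (a + b)).map F).prod i k)
          (fun i _ => nonneg_of_mem_rowStochastic hAQ) (mem_univ i₀)

end Matrix

section Blocks

variable {Ω α : Type*} [MeasurableSpace Ω]

def IsIIDWithMass (μ : Measure Ω) (X : ℕ → Ω → α) (ν : α → ℝ≥0∞) : Prop :=
  ∀ (s : Finset ℕ) (g : ℕ → α), μ {ω | ∀ t ∈ s, X t ω = g t} = ∏ t ∈ s, ν (g t)

variable {μ : Measure Ω} {X : ℕ → Ω → α} {ν : α → ℝ≥0∞}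

theorem measure_forall_comp_eq_prod (hX : IsIIDWithMass μ X ν) {β : Type*} {φ : β → ℕ} {T : Finset β} (hφ : Set.InjOn φ T) (g : ℕ → α) :
    μ {ω | ∀ b ∈ T, X (φ b) ω = g (φ b)} = ∏ b ∈ T, ν (g (φ b)) := by
  rw [← Finset.prod_image (f := fun t => ν (g t)) hφ, ← hX]
  simp

-- The offset `+ 1` matches the indexing of the random matrices `K(t)` from `t = 1`.
def blockEvent (X : ℕ → Ω → α) {L : ℕ} (f : Fin L → α) (n : ℕ) : Set Ω :=
  {ω | ∀ s : Fin L, X (n * L + s + 1) ω = f s}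

theorem measure_biInter_blockEvent (hX : IsIIDWithMass μ X ν) {L : ℕ} [NeZero L]
    (f : Fin L → α) (S : Finset ℕ) :
    μ (⋂ n ∈ S, blockEvent X f n) = (∏ s, ν (f s)) ^ S.card := by
  set φ : ℕ × Fin L → ℕ := fun b => b.1 * L + b.2 + 1
  set g : ℕ → α := fun t => f (Nat.divModEquiv L (t - 1)).2
  have hg (n : ℕ) (s : Fin L) : g (n * L + s + 1) = f s := by
    show f (Nat.divModEquiv L ((Nat.divModEquiv L).symm (n, s))).2 = f s
    rw [Equiv.apply_symm_apply]
  have hφ : Set.InjOn φ ↑(S ×ˢ (univ : Finset (Fin L))) :=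
    fun b _ b' _ h => (Nat.divModEquiv L).symm.injective (Nat.add_right_cancel h)
  have hset : ⋂ n ∈ S, blockEvent X f n = {ω | ∀ b ∈ S ×ˢ univ, X (φ b) ω = g (φ b)} := by
    ext ω
    simp only [blockEvent, Set.mem_iInter, Set.mem_ofPred_eq, mem_product, mem_univ, and_true,
      Prod.forall, φ, hg]
    exact ⟨fun h a s ha => h a ha s, fun h a ha s => h a s ha⟩
  rw [hset, measure_forall_comp_eq_prod hX hφ, Finset.prod_product]
  simp only [φ, hg, prod_const]

variable [MeasurableSpace α] [MeasurableSingletonClass α]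

theorem measurableSet_blockEvent (hXm : ∀ t, Measurable (X t)) {L : ℕ} (f : Fin L → α)
    (n : ℕ) : MeasurableSet (blockEvent X f n) := by
  simp only [blockEvent, Set.ofPred_forall]
  exact .iInter fun s => hXm _ (measurableSet_singleton (f s))

theorem ae_frequently_mem_blockEvent (hXm : ∀ t, Measurable (X t)) (hX : IsIIDWithMass μ X ν)
    {L : ℕ} [NeZero L] {f : Fin L → α} (hf : ∀ s, ν (f s) ≠ 0) :
    ∀ᵐ ω ∂μ, ∃ᶠ n in atTop, ω ∈ blockEvent X f n := by
  have hmeas := measurableSet_blockEvent hXm f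
  have hsingle (n : ℕ) : μ (blockEvent X f n) = ∏ s, ν (f s) := by
    simpa using measure_biInter_blockEvent hX f {n}
  have hindep : iIndepSet (blockEvent X f) μ := (iIndepSet_iff_meas_biInter hmeas).2 fun S => by
    simp only [measure_biInter_blockEvent hX f S, hsingle, prod_const]
  have := hindep.isProbabilityMeasure
  have hsum : ∑' n, μ (blockEvent X f n) = ∞ := by
    simpa [hsingle] using
      ENNReal.tsum_const_eq_top_of_ne_zero (α := ℕ) (prod_ne_zero_iff.2 fun s _ => hf s)
  have hlimsup := measure_limsup_eq_one hmeas hindep hsum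
  refine ae_iff.2 ?_
  simp only [← mem_limsup_iff_frequently_mem]
  exact (prob_compl_eq_zero_iff (.measurableSet_limsup hmeas)).2 hlimsup

end Blocks

theorem stmt12_general {N M : ℕ}
    (K : Fin M → Matrix (Fin N) (Fin N) ℝ)
    (hK : ∀ k, RowStochastic (K k))
    (p : Fin M → ℝ) (hp : ∀ k, 0 < p k)
    -- `(K(t))_{t ≥ 1}` is an i.i.d. sequence of random matrices, `K(t) = K (ι t ω)`,
    -- with `ℙ[K(t) = Kᵢ] = pᵢ`:
    {Ω : Type*} [MeasurableSpace Ω] (μ : Measure Ω)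
    (ι : ℕ → Ω → Fin M) (hmeas : ∀ t, Measurable (ι t))
    (hiid : ∀ (s : Finset ℕ) (g : ℕ → Fin M),
      μ {ω | ∀ t ∈ s, ι t ω = g t} = ∏ t ∈ s, ENNReal.ofReal (p (g t)))
    -- `P(t) = K(1) K(2) ⋯ K(t)` and `w(t)ᵀ = 𝟙ᵀ P(t)`:
    (P : ℕ → Ω → Matrix (Fin N) (Fin N) ℝ)
    (hP : ∀ t ω, P t ω = ((List.range t).map fun u => K (ι (u + 1) ω)).prod)
    (w : ℕ → Ω → Fin N → ℝ)
    (hw : ∀ t ω j, w t ω j = ∑ i, P t ω i j)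
    -- `mbar` is the smallest strictly positive entry occurring among the matrices of `𝒦`:
    (mbar : ℝ)
    (hlb : ∀ k i j, 0 < K k i j → mbar ≤ K k i j)
    (hmem : ∃ k i j, K k i j = mbar ∧ 0 < K k i j)
    -- some product of `L` matrices of `𝒦` has all entries strictly positive:
    (L : ℕ) (hL : 1 ≤ L)
    (hpos : ∃ f : Fin L → Fin M, ∀ i j, 0 < ((List.ofFn fun s => K (f s)).prod) i j)
    (x0 : Fin N → ℝ) :
    ∀ᵐ ω ∂μ,
      {t : ℕ | 1 ≤ t ∧ mbar ^ L ≤ ⨅ k, w t ω k}.Infinite ∧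
      {t : ℕ | 1 ≤ t ∧
        (∑ i, x0 i ^ 2) / (⨅ k, w t ω k) ^ 2 ≤
          (∑ i, x0 i ^ 2) * (mbar ^ (2 * L))⁻¹}.Infinite := by
  obtain ⟨f, hf⟩ := hpos
  obtain ⟨k₀, i₀, j₀, hk₀, hpos₀⟩ := hmem
  have hmbar : 0 < mbar := hk₀ ▸ hpos₀
  have : Nonempty (Fin N) := ⟨i₀⟩
  have : NeZero L := ⟨by omega⟩
  have hKst (k : Fin M) : K k ∈ rowStochastic ℝ (Fin N) := mem_rowStochastic_iff_sum.2 (hK k)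
  have hentry (k : Fin M) (i j : Fin N) : K k i j = 0 ∨ mbar ≤ K k i j :=
    ((hK k).1 i j).eq_or_lt.imp Eq.symm (hlb k i j)
  have hQ (i j : Fin N) : mbar ^ L ≤ (List.ofFn fun s => K (f s)).prod i j := by
    have := list_prod_apply_eq_zero_or_pow_le hmbar.le (List.ofFn fun s => K (f s))
      (by simpa using fun s => hentry (f s)) i j
    simpa using this.resolve_left (hf i j).ne'
  have hblock (ω : Ω) (n : ℕ) (hn : ω ∈ blockEvent ι f n) :
      mbar ^ L ≤ ⨅ k, w ((n + 1) * L) ω k := by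
    refine le_ciInf fun k => ?_
    rw [hw, hP, add_one_mul]
    refine le_sum_list_prod_range_apply (fun u => hKst _) (n * L) L (fun i j => ?_) k
    simpa only [show ∀ s : Fin L, ι (n * L + s + 1) ω = f s from hn] using hQ i j
  have hend : Tendsto (fun n => (n + 1) * L) atTop atTop :=
    tendsto_atTop_mono (fun n => (Nat.le_succ n).trans (Nat.le_mul_of_pos_right _ hL)) tendsto_id
  filter_upwards [ae_frequently_mem_blockEvent (ν := fun a => ENNReal.ofReal (p a)) hmeas hiid
    (fun s => (ENNReal.ofReal_pos.2 (hp (f s))).ne')] with ω hω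
  have hgood : {t : ℕ | 1 ≤ t ∧ mbar ^ L ≤ ⨅ k, w t ω k}.Infinite :=
    Nat.frequently_atTop_iff_infinite.1 <|
      (eventually_ge_atTop 1).and_frequently (hend.frequently (hω.mono (hblock ω)))
  refine ⟨hgood, hgood.mono ?_⟩
  rintro t ⟨ht, hmin⟩
  refine ⟨ht, ?_⟩
  rw [← div_eq_mul_inv, pow_mul']
  exact div_le_div_of_nonneg_left (sum_nonneg fun i _ => sq_nonneg (x0 i)) (by positivity)
    (pow_le_pow_left₀ (by positivity) hmin 2)

theorem stmt12 {N M : ℕ} (hN : 1 ≤ N) (hM : 1 ≤ M)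
    (K : Fin M → Matrix (Fin N) (Fin N) ℝ)
    (hK : ∀ k, RowStochastic (K k))
    (hdiag : ∀ k i, 0 < K k i i)
    (p : Fin M → ℝ) (hp : ∀ k, 0 < p k) (hpsum : ∑ k, p k = 1)
    -- `(K(t))_{t ≥ 1}` is an i.i.d. sequence of random matrices, `K(t) = K (ι t ω)`,
    -- with `ℙ[K(t) = Kᵢ] = pᵢ`:
    {Ω : Type*} [MeasurableSpace Ω] (μ : Measure Ω) [IsProbabilityMeasure μ]
    (ι : ℕ → Ω → Fin M) (hmeas : ∀ t, Measurable (ι t))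
    (hiid : ∀ (s : Finset ℕ) (g : ℕ → Fin M),
      μ {ω | ∀ t ∈ s, ι t ω = g t} = ∏ t ∈ s, ENNReal.ofReal (p (g t)))
    -- `P(t) = K(1) K(2) ⋯ K(t)` and `w(t)ᵀ = 𝟙ᵀ P(t)`:
    (P : ℕ → Ω → Matrix (Fin N) (Fin N) ℝ)
    (hP : ∀ t ω, P t ω = ((List.range t).map fun u => K (ι (u + 1) ω)).prod)
    (w : ℕ → Ω → Fin N → ℝ)
    (hw : ∀ t ω j, w t ω j = ∑ i, P t ω i j)
    -- `mbar` is the smallest strictly positive entry occurring among the matrices of `𝒦`: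
    (mbar : ℝ)
    (hlb : ∀ k i j, 0 < K k i j → mbar ≤ K k i j)
    (hmem : ∃ k i j, K k i j = mbar ∧ 0 < K k i j)
    -- some product of `L` matrices of `𝒦` has all entries strictly positive:
    (L : ℕ) (hL : 1 ≤ L)
    (hpos : ∃ f : Fin L → Fin M, ∀ i j, 0 < ((List.ofFn fun s => K (f s)).prod) i j)
    (x0 : Fin N → ℝ) (hx0 : x0 ≠ 0) :
    ∀ᵐ ω ∂μ,
      {t : ℕ | 1 ≤ t ∧ mbar ^ L ≤ ⨅ k, w t ω k}.Infinite ∧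
      {t : ℕ | 1 ≤ t ∧
        (∑ i, x0 i ^ 2) / (⨅ k, w t ω k) ^ 2 ≤
          (∑ i, x0 i ^ 2) * (mbar ^ (2 * L))⁻¹}.Infinite :=
  stmt12_general K hK p hp μ ι hmeas hiid P hP w hw mbar hlb hmem L hL hpos x0
end

section
/- Let N ≥ 1, let K be an N×N real matrix with nonnegative entries, and let s, w ∈ ℝᴺ with all entries of w strictly positive and all entries of Kᵀw strictly positive. Define s' = Kᵀs, w' = Kᵀw, and the entrywise quotients xᵢ = sᵢ/wᵢ and x'ⱼ = s'ⱼ/w'ⱼ. Then for every real number c, max_{1≤j≤N} |x'ⱼ − c| ≤ max_{1≤i≤N} |xᵢ − c|. In particular, along the Sum-Weight iteration the quantity ‖x(t) − x_ave𝟙‖_∞ = max_i |xᵢ(t) − x_ave| is non-increasing in t. -/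
open Matrix Finset

theorem stmt13 {N : ℕ} (hN : 1 ≤ N)
    (K : Matrix (Fin N) (Fin N) ℝ) (hK : ∀ i j, 0 ≤ K i j)
    (s w : Fin N → ℝ)
    (hw : ∀ i, 0 < w i)
    -- `s' = Kᵀs` and `w' = Kᵀw`, with all entries of `Kᵀw` strictly positive:
    (s' w' : Fin N → ℝ)
    (hs' : ∀ j, s' j = ∑ i, K i j * s i)
    (hw' : ∀ j, w' j = ∑ i, K i j * w i)
    (hw'pos : ∀ j, 0 < w' j)
    -- entrywise quotients `x = s/w` and `x' = s'/w'`: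
    (x x' : Fin N → ℝ)
    (hx : ∀ i, x i = s i / w i)
    (hx' : ∀ j, x' j = s' j / w' j)
    (c : ℝ) :
    (⨆ j, |x' j - c|) ≤ ⨆ i, |x i - c| := by
  haveI : Nonempty (Fin N) := ⟨⟨0, hN⟩⟩
  set M := ⨆ i, |x i - c| with hM
  have hle : ∀ i, |x i - c| ≤ M := fun i =>
    le_ciSup (Set.Finite.bddAbove (Set.finite_range (fun i => |x i - c|))) i
  apply ciSup_le
  intro j
  have hsx : ∀ i, s i = w i * x i := fun i => by
    rw [hx i, mul_div_cancel₀ _ (hw i).ne']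
  have key : x' j - c = (∑ i, K i j * w i * (x i - c)) / w' j := by
    rw [hx' j, eq_div_iff (hw'pos j).ne', sub_mul, div_mul_cancel₀ _ (hw'pos j).ne',
      hs' j, hw' j, Finset.mul_sum]
    rw [← Finset.sum_sub_distrib]
    apply Finset.sum_congr rfl
    intro i _
    rw [hsx i]; ring
  rw [key, abs_div, abs_of_pos (hw'pos j), div_le_iff₀ (hw'pos j)]
  calc |∑ i, K i j * w i * (x i - c)| ≤ ∑ i, |K i j * w i * (x i - c)| :=
        Finset.abs_sum_le_sum_abs _ _
    _ ≤ ∑ i, K i j * w i * M := by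
        apply Finset.sum_le_sum
        intro i _
        rw [abs_mul, abs_of_nonneg (mul_nonneg (hK i j) (hw i).le)]
        exact mul_le_mul_of_nonneg_left (hle i) (mul_nonneg (hK i j) (hw i).le)
    _ = M * w' j := by rw [hw' j, Finset.mul_sum, Finset.sum_congr rfl]; intro i _; ring
end

section
/- Let 𝒦 = {K₁, …, K_M} be a finite set of row-stochastic N×N real matrices, each with strictly positive diagonal entries, let p₁, …, p_M be strictly positive reals summing to 1, and let (K(t))_{t≥1} be an i.i.d. sequence of random matrices on a probability space with ℙ[K(t) = Kᵢ] = pᵢ for each i. Set P(t) = K(1)K(2)⋯K(t); given x(0) ∈ ℝᴺ define s(t)ᵀ = x(0)ᵀP(t), w(t)ᵀ = 𝟙ᵀP(t), x(t) = s(t)/w(t) (entrywise quotient, well defined since every entry of w(t) is strictly positive because the matrices in 𝒦 have positive diagonals), and x_ave = (1/N)𝟙ᵀx(0). Then the following are equivalent: (a) for every initial vector x(0) ∈ ℝᴺ, x(t) converges almost surely to x_ave·𝟙 as t → ∞; (b) the matrix Σᵢ pᵢKᵢ is primitive. -/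
/-!
If `A = ∑ k, p k • K k` is not primitive, its positive diagonal makes it reducible: a proper
nonempty set `S` of indices is closed (`A i j = 0` for `i ∈ S`, `j ∉ S`). Then every `K k`, hence
every product `P(t)`, is closed on `S`; started from the indicator of `Sᶜ`, the state stays `1` at
each index outside `S`, while the average is `< 1`.

If `A ^ m > 0`, the positive diagonals make the cyclic product `(K 0 K 1 ⋯ K (M - 1)) ^ m`
positive, say `≥ δ` entrywise, and by the second Borel–Cantelli lemma this word almost surely
occurs infinitely often among the disjoint blocks of length `m M` of the sequence `K(t)`. Right
multiplication by a stochastic matrix never increases the ℓ¹ distance between two rows of `P(t)`,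
and an occurrence of the word shrinks it by the factor `1 - N δ`. Hence the rows of `P(t)` merge,
and since `P(t) ≥ δ` after an occurrence, every ratio `x(t) j` becomes an average of `x(0)` with
almost uniform weights.
-/

open Matrix Finset MeasureTheory Filter

open scoped Topology

lemma exists_pos_le_of_pos {ι : Type*} [Finite ι] [Nonempty ι] {f : ι → ℝ} (hf : ∀ i, 0 < f i) :
    ∃ δ > 0, ∀ i, δ ≤ f i :=
  let ⟨i₀, h⟩ := Finite.exists_min f
  ⟨f i₀, hf i₀, h⟩

section RangeProd

variable {α : Type*} [Monoid α] {F G : ℕ → α}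

def rangeProd (F : ℕ → α) (t : ℕ) : α := ((List.range t).map F).prod

lemma rangeProd_succ (t : ℕ) : rangeProd F (t + 1) = rangeProd F t * F t :=
  List.prod_range_succ F t

lemma rangeProd_add (a b : ℕ) :
    rangeProd F (a + b) = rangeProd F a * rangeProd (fun u => F (a + u)) b := by
  simp only [rangeProd, List.range_add, List.map_append, List.prod_append, List.map_map]
  rfl

lemma rangeProd_congr {t : ℕ} (h : ∀ u < t, F u = G u) : rangeProd F t = rangeProd G t :=
  congrArg List.prod (List.map_congr_left fun u hu => h u (List.mem_range.1 hu))

lemma rangeProd_mem {s : Submonoid α} (h : ∀ u, F u ∈ s) (t : ℕ) : rangeProd F t ∈ s :=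
  s.list_prod_mem fun _ hx => by
    obtain ⟨u, -, rfl⟩ := List.mem_map.1 hx
    exact h u

lemma Function.Periodic.rangeProd_mul {L : ℕ} (hF : Function.Periodic F L) (m : ℕ) :
    rangeProd F (m * L) = rangeProd F L ^ m := by
  induction m with
  | zero => simp [rangeProd]
  | succ m ih =>
    have hshift : (fun u => F (m * L + u)) = F := funext fun u => by
      simpa [add_comm] using (hF.nat_mul m) u
    rw [add_one_mul, rangeProd_add, ih, hshift, pow_succ]

end RangeProd

section NonnegMatrix

lemma single_mul_le_mul_apply {n : Type*} [Fintype n] {A B : Matrix n n ℝ}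
    (hA : ∀ i j, 0 ≤ A i j) (hB : ∀ i j, 0 ≤ B i j) (i k j : n) :
    A i k * B k j ≤ (A * B) i j :=
  Finset.single_le_sum (f := fun l => A i l * B l j)
    (fun l _ => mul_nonneg (hA i l) (hB l j)) (Finset.mem_univ k)

variable {n : Type*} [Fintype n] [DecidableEq n] {A R : Matrix n n ℝ}

variable (n) in
def posDiagStochastic : Submonoid (Matrix n n ℝ) where
  carrier := {A | A ∈ rowStochastic ℝ n ∧ ∀ i, 0 < A i i}
  mul_mem' {A B} hA hB := ⟨mul_mem hA.1 hB.1, fun i =>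
    (mul_pos (hA.2 i) (hB.2 i)).trans_le (single_mul_le_mul_apply hA.1.1 hB.1.1 i i i)⟩
  one_mem' := ⟨one_mem _, fun i => by simp⟩

lemma rangeProd_apply_pos {F : ℕ → Matrix n n ℝ} (hF : ∀ u, F u ∈ posDiagStochastic n)
    {u t : ℕ} (hut : u < t) {i j : n} (hij : 0 < F u i j) : 0 < rangeProd F t i j := by
  induction t with
  | zero => omega
  | succ t ih =>
    have hP := rangeProd_mem hF t
    rw [rangeProd_succ]
    rcases (Nat.lt_succ_iff_lt_or_eq.1 hut) with hut | rfl
    · exact (mul_pos (ih hut) ((hF t).2 j)).trans_le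
        (single_mul_le_mul_apply hP.1.1 (hF t).1.1 i j j)
    · exact (mul_pos (hP.2 i) hij).trans_le (single_mul_le_mul_apply hP.1.1 (hF u).1.1 i i j)

lemma pow_apply_pos_of_pos_imp (hA : ∀ i j, 0 ≤ A i j) (hR : ∀ i j, 0 ≤ R i j)
    (hAR : ∀ i j, 0 < A i j → 0 < R i j) (m : ℕ) {i j : n} (h : 0 < (A ^ m) i j) :
    0 < (R ^ m) i j := by
  induction m generalizing j with
  | zero => simpa using h
  | succ m ih =>
    rw [pow_succ, mul_apply, Finset.sum_pos_iff_of_nonneg fun k _ =>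
      mul_nonneg (pow_apply_nonneg hA m i k) (hA k j)] at h
    obtain ⟨k, -, hk⟩ := h
    have hAm := pos_of_mul_pos_left hk (hA k j)
    have hAkj := pos_of_mul_pos_right hk (pow_apply_nonneg hA m i k)
    rw [pow_succ]
    exact (mul_pos (ih hAm) (hAR k j hAkj)).trans_le
      (single_mul_le_mul_apply (pow_apply_nonneg hR m) hR i k j)

lemma pow_apply_pos_of_le (hA : ∀ i j, 0 ≤ A i j) (hdiag : ∀ i, 0 < A i i) {m m' : ℕ}
    (hm : m ≤ m') {i j : n} (h : 0 < (A ^ m) i j) : 0 < (A ^ m') i j := by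
  induction m', hm using Nat.le_induction with
  | base => exact h
  | succ m' _ ih =>
    rw [pow_succ]
    exact (mul_pos ih (hdiag j)).trans_le
      (single_mul_le_mul_apply (pow_apply_nonneg hA m') hA i j j)

lemma exists_closed_of_not_isPrimitive (hA : ∀ i j, 0 ≤ A i j) (hdiag : ∀ i, 0 < A i i)
    (h : ¬ _root_.IsPrimitive A) :
    ∃ S : Set n, ∃ i₀ ∈ S, ∃ j₀ ∉ S, ∀ i ∈ S, ∀ j ∉ S, A i j = 0 := by
  by_cases hall : ∀ i j, ∃ m, 0 < (A ^ m) i j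
  · choose f hf using hall
    refine absurd ⟨∑ i, ∑ j, f i j + 1, le_add_self, fun i j => ?_⟩ h
    refine pow_apply_pos_of_le hA hdiag ?_ (hf i j)
    exact Nat.le_succ_of_le <|
      (Finset.single_le_sum (fun _ _ => Nat.zero_le _) (mem_univ j)).trans
        (Finset.single_le_sum (f := fun i' => ∑ j', f i' j') (fun _ _ => Nat.zero_le _)
          (mem_univ i))
  · push Not at hall
    obtain ⟨i₀, j₀, h₀⟩ := hall
    refine ⟨{j | ∃ m, 0 < (A ^ m) i₀ j}, i₀, ⟨0, by simp⟩, j₀, fun ⟨m, hm⟩ => (h₀ m).not_gt hm,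
      fun i ⟨m, hm⟩ j hj => ?_⟩
    by_contra hij
    refine hj ⟨m + 1, ?_⟩
    rw [pow_succ]
    exact (mul_pos hm ((hA i j).lt_of_ne' hij)).trans_le
      (single_mul_le_mul_apply (pow_apply_nonneg hA m) hA i₀ i j)

lemma rangeProd_apply_eq_zero {α : Type*} [Semiring α] {F : ℕ → Matrix n n α} {S : Set n}
    (hF : ∀ u, ∀ i ∈ S, ∀ j ∉ S, F u i j = 0) (t : ℕ) :
    ∀ i ∈ S, ∀ j ∉ S, rangeProd F t i j = 0 := by
  induction t with
  | zero => exact fun i hi j hj => one_apply_ne (ne_of_mem_of_not_mem hi hj)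
  | succ t ih =>
    intro i hi j hj
    rw [rangeProd_succ, mul_apply]
    refine Finset.sum_eq_zero fun k _ => ?_
    by_cases hk : k ∈ S
    · rw [hF t k hk j hj, mul_zero]
    · rw [ih i hi k hk, zero_mul]

end NonnegMatrix

section RowDist

variable {n : Type*} [Fintype n] [DecidableEq n] {A B : Matrix n n ℝ}

def rowDist (A : Matrix n n ℝ) (i i' : n) : ℝ := ∑ j, |A i j - A i' j|

lemma rowDist_le_two (hA : A ∈ rowStochastic ℝ n) (i i' : n) : rowDist A i i' ≤ 2 := by
  calc rowDist A i i' ≤ ∑ j, (A i j + A i' j) := Finset.sum_le_sum fun j _ =>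
        (abs_sub _ _).trans_eq (by rw [abs_of_nonneg (hA.1 i j), abs_of_nonneg (hA.1 i' j)])
    _ = 2 := by
      rw [Finset.sum_add_distrib, sum_row_of_mem_rowStochastic hA,
        sum_row_of_mem_rowStochastic hA]
      norm_num

lemma card_mul_le_one (hB : B ∈ rowStochastic ℝ n) {δ : ℝ} (hδ : ∀ i j, δ ≤ B i j) (i : n) :
    Fintype.card n * δ ≤ 1 := by
  calc Fintype.card n * δ = ∑ _j : n, δ := by simp
    _ ≤ ∑ j, B i j := Finset.sum_le_sum fun j _ => hδ i j
    _ = 1 := sum_row_of_mem_rowStochastic hB i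

lemma le_mul_apply_of_le (hA : A ∈ rowStochastic ℝ n) {δ : ℝ} (hδ : ∀ i j, δ ≤ B i j)
    (i j : n) : δ ≤ (A * B) i j :=
  calc δ = ∑ k, A i k * δ := by rw [← Finset.sum_mul, sum_row_of_mem_rowStochastic hA, one_mul]
    _ ≤ (A * B) i j := Finset.sum_le_sum fun k _ => mul_le_mul_of_nonneg_left (hδ k j) (hA.1 i k)

/-- Dobrushin-type contraction: since the rows of `A` have equal sums, `δ` can be subtracted from
every entry of `B` before estimating. -/
lemma rowDist_mul_le (hA : A ∈ rowStochastic ℝ n) (hB : B ∈ rowStochastic ℝ n) {δ : ℝ}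
    (hδ : ∀ i j, δ ≤ B i j) (i i' : n) :
    rowDist (A * B) i i' ≤ (1 - Fintype.card n * δ) * rowDist A i i' := by
  set c : n → ℝ := fun k => A i k - A i' k
  have hc : ∑ k, c k = 0 := by
    simp [c, Finset.sum_sub_distrib, sum_row_of_mem_rowStochastic hA]
  have hcol : ∀ j, (A * B) i j - (A * B) i' j = ∑ k, c k * (B k j - δ) := fun j => by
    simp only [mul_sub, Finset.sum_sub_distrib, ← Finset.sum_mul, hc, zero_mul, sub_zero]
    simp only [mul_apply, c, sub_mul, Finset.sum_sub_distrib]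
  calc rowDist (A * B) i i' = ∑ j, |∑ k, c k * (B k j - δ)| := by simp only [rowDist, hcol]
    _ ≤ ∑ j, ∑ k, |c k| * (B k j - δ) := Finset.sum_le_sum fun j _ =>
        (Finset.abs_sum_le_sum_abs _ _).trans_eq <| Finset.sum_congr rfl fun k _ => by
          rw [abs_mul, abs_of_nonneg (sub_nonneg.2 (hδ k j))]
    _ = ∑ k, |c k| * ∑ j, (B k j - δ) := by
        rw [Finset.sum_comm]
        simp only [Finset.mul_sum]
    _ = (1 - Fintype.card n * δ) * rowDist A i i' := by
        simp [rowDist, c, Finset.sum_sub_distrib, sum_row_of_mem_rowStochastic hB,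
          Finset.mul_sum, mul_comm]

lemma rowDist_mul_le_rowDist (hA : A ∈ rowStochastic ℝ n) (hB : B ∈ rowStochastic ℝ n)
    (i i' : n) : rowDist (A * B) i i' ≤ rowDist A i i' := by
  simpa using rowDist_mul_le hA hB hB.1 i i'

end RowDist

lemma abs_div_sum_sub_avg_le {ι : Type*} [Fintype ι] [Nonempty ι] {c x : ι → ℝ} {a b : ℝ}
    (ha : 0 < a) (hca : ∀ i, a ≤ c i) (hcb : ∀ i i', |c i - c i'| ≤ b) :
    |(∑ i, c i * x i) / (∑ i, c i) - (Fintype.card ι : ℝ)⁻¹ * ∑ i, x i| ≤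
      b / (Fintype.card ι * a) * ∑ i, |x i| := by
  set S := ∑ i, c i
  set N : ℝ := (Fintype.card ι : ℝ)
  have hN : 0 < N := Nat.cast_pos.2 Fintype.card_pos
  have hS : N * a ≤ S := by simpa [N] using Finset.sum_le_sum fun i (_ : i ∈ univ) => hca i
  have hSpos : 0 < S := (mul_pos hN ha).trans_le hS
  have hdev : ∀ i, |c i - S / N| ≤ b := fun i => by
    have : c i - S / N = (∑ i', (c i - c i')) / N := by
      simp only [Finset.sum_sub_distrib, S, N, Finset.sum_const, Finset.card_univ, nsmul_eq_mul]
      field_simp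
    rw [this, abs_div, abs_of_pos hN, div_le_iff₀ hN]
    calc |∑ i', (c i - c i')| ≤ ∑ i', |c i - c i'| := Finset.abs_sum_le_sum_abs _ _
      _ ≤ ∑ _i' : ι, b := Finset.sum_le_sum fun i' _ => hcb i i'
      _ = b * N := by simp [N, mul_comm]
  have hsplit : (∑ i, c i * x i) / S - N⁻¹ * ∑ i, x i = (∑ i, (c i - S / N) * x i) / S := by
    simp only [sub_mul, Finset.sum_sub_distrib, ← Finset.mul_sum]
    field_simp
  rw [hsplit, abs_div, abs_of_pos hSpos]
  calc |∑ i, (c i - S / N) * x i| / S ≤ (b * ∑ i, |x i|) / S := by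
        gcongr
        refine (Finset.abs_sum_le_sum_abs _ _).trans ?_
        rw [Finset.mul_sum]
        exact Finset.sum_le_sum fun i _ => by
          rw [abs_mul]; exact mul_le_mul_of_nonneg_right (hdev i) (abs_nonneg _)
    _ ≤ (b * ∑ i, |x i|) / (N * a) := by
        have hb : 0 ≤ b := (abs_nonneg _).trans (hdev (Classical.arbitrary ι))
        gcongr
    _ = b / (N * a) * ∑ i, |x i| := by ring

section WeightedAvg

variable {n : Type*} [Fintype n]

noncomputable def columnWeightedAvg (P : Matrix n n ℝ) (x : n → ℝ) (j : n) : ℝ :=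
  (∑ i, P i j * x i) / ∑ i, P i j

lemma abs_columnWeightedAvg_mul_sub_le {A B : Matrix n n ℝ} {δ ε : ℝ} (hδ : 0 < δ)
    (hAδ : ∀ i k, δ ≤ A i k) (hAε : ∀ i i', rowDist A i i' ≤ ε) (hB : ∀ i j, 0 ≤ B i j) {j : n}
    (hBj : 0 < B j j) (x : n → ℝ) :
    |columnWeightedAvg (A * B) x j - (Fintype.card n : ℝ)⁻¹ * ∑ i, x i| ≤
      ε / (Fintype.card n * δ) * ∑ i, |x i| := by
  have : Nonempty n := ⟨j⟩
  set s := ∑ k, B k j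
  have hs : 0 < s := hBj.trans_le (Finset.single_le_sum (fun k _ => hB k j) (mem_univ j))
  have hlow : ∀ i, δ * s ≤ (A * B) i j := fun i => by
    rw [mul_apply, Finset.mul_sum]
    exact Finset.sum_le_sum fun k _ => mul_le_mul_of_nonneg_right (hAδ i k) (hB k j)
  have hclose : ∀ i i', |(A * B) i j - (A * B) i' j| ≤ ε * s := fun i i' => by
    rw [mul_apply, mul_apply, ← Finset.sum_sub_distrib, Finset.mul_sum]
    refine (Finset.abs_sum_le_sum_abs _ _).trans (Finset.sum_le_sum fun k _ => ?_)
    rw [← sub_mul, abs_mul, abs_of_nonneg (hB k j)]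
    exact mul_le_mul_of_nonneg_right ((Finset.single_le_sum (f := fun k => |A i k - A i' k|)
      (fun _ _ => abs_nonneg _) (mem_univ k)).trans (hAε i i')) (hB k j)
  rw [columnWeightedAvg]
  convert abs_div_sum_sub_avg_le (mul_pos hδ hs) hlow hclose using 2
  field_simp

end WeightedAvg

section Convergence

variable {n : Type*} [Fintype n] [DecidableEq n] {F : ℕ → Matrix n n ℝ} {L : ℕ}
  {Q : Matrix n n ℝ}

lemma exists_block_rowDist_le (hF : ∀ u, F u ∈ rowStochastic ℝ n) (hQ : Q ∈ rowStochastic ℝ n)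
    {δ : ℝ} (hδ : ∀ i j, δ ≤ Q i j) (hθ : 0 ≤ 1 - Fintype.card n * δ)
    (hocc : ∃ᶠ m in atTop, rangeProd (fun u => F (m * L + u)) L = Q) (r : ℕ) :
    ∃ m, rangeProd (fun u => F (m * L + u)) L = Q ∧
      ∀ i i', rowDist (rangeProd F (m * L + L)) i i' ≤ 2 * (1 - Fintype.card n * δ) ^ r := by
  induction r with
  | zero =>
    obtain ⟨m, hm⟩ := hocc.exists
    exact ⟨m, hm, fun i i' => by simpa using rowDist_le_two (rangeProd_mem hF _) i i'⟩
  | succ r ih =>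
    obtain ⟨m, -, hm⟩ := ih
    obtain ⟨m', hmm', hm'⟩ := frequently_atTop.1 hocc (m + 1)
    obtain ⟨d, hd⟩ : ∃ d, m' * L = m * L + L + d :=
      Nat.exists_eq_add_of_le (by simpa [add_one_mul] using Nat.mul_le_mul_right L hmm')
    refine ⟨m', hm', fun i i' => ?_⟩
    rw [rangeProd_add, hm', hd, rangeProd_add, pow_succ', mul_left_comm]
    calc _ ≤ (1 - Fintype.card n * δ) * rowDist (rangeProd F (m * L + L) *
          rangeProd (fun u => F (m * L + L + u)) d) i i' :=
          rowDist_mul_le (mul_mem (rangeProd_mem hF _) (rangeProd_mem (fun u => hF _) _)) hQ hδ i i'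
      _ ≤ (1 - Fintype.card n * δ) * rowDist (rangeProd F (m * L + L)) i i' := by
          gcongr
          exact rowDist_mul_le_rowDist (rangeProd_mem hF _) (rangeProd_mem (fun u => hF _) d) i i'
      _ ≤ _ := by gcongr; exact hm i i'

theorem tendsto_columnWeightedAvg (hF : ∀ u, F u ∈ posDiagStochastic n) (hQ : ∀ i j, 0 < Q i j)
    (hocc : ∃ᶠ m in atTop, rangeProd (fun u => F (m * L + u)) L = Q) (x : n → ℝ) (j : n) :
    Tendsto (fun t => columnWeightedAvg (rangeProd F t) x j) atTop
      (𝓝 ((Fintype.card n : ℝ)⁻¹ * ∑ i, x i)) := by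
  have : Nonempty n := ⟨j⟩
  have hFs : ∀ u, F u ∈ rowStochastic ℝ n := fun u => (hF u).1
  obtain ⟨δ, hδ, hδQ⟩ := exists_pos_le_of_pos fun ij : n × n => hQ ij.1 ij.2
  replace hδQ : ∀ i k, δ ≤ Q i k := fun i k => hδQ (i, k)
  have hQs : Q ∈ rowStochastic ℝ n := by
    obtain ⟨m, hm⟩ := hocc.exists
    exact hm ▸ rangeProd_mem (fun u => hFs _) L
  set θ := 1 - Fintype.card n * δ
  have hθ0 : 0 ≤ θ := sub_nonneg.2 (card_mul_le_one hQs hδQ j)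
  have hθ1 : θ < 1 := sub_lt_self _ (mul_pos (Nat.cast_pos.2 Fintype.card_pos) hδ)
  rw [Metric.tendsto_atTop]
  intro ε hε
  have hlim : Tendsto (fun r : ℕ => 2 * θ ^ r / (Fintype.card n * δ) * ∑ i, |x i|) atTop (𝓝 0) := by
    simpa using (((tendsto_pow_atTop_nhds_zero_of_lt_one hθ0 hθ1).const_mul 2).div_const
      (Fintype.card n * δ)).mul_const (∑ i, |x i|)
  obtain ⟨r, hr⟩ := (hlim.eventually (gt_mem_nhds hε)).exists
  obtain ⟨m, hm, hdist⟩ := exists_block_rowDist_le hFs hQs hδQ hθ0 hocc r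
  refine ⟨m * L + L, fun t ht => ?_⟩
  obtain ⟨d, rfl⟩ := Nat.exists_eq_add_of_le ht
  have hlow : ∀ i k, δ ≤ rangeProd F (m * L + L) i k := by
    rw [rangeProd_add, hm]
    exact le_mul_apply_of_le (rangeProd_mem hFs _) hδQ
  have hB := rangeProd_mem (fun u => hF (m * L + L + u)) d
  rw [Real.dist_eq, rangeProd_add]
  exact (abs_columnWeightedAvg_mul_sub_le hδ hlow hdist hB.1.1 (hB.2 j) x).trans_lt hr

end Convergence

section Iid

open Function

variable {Ω β : Type*} [MeasurableSpace Ω] [MeasurableSpace β] [MeasurableSingletonClass β]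
  {μ : Measure Ω} {ι : ℕ → Ω → β} {p : β → ℝ}

variable (μ ι p) in
def IsIidWithWeights : Prop :=
  ∀ (s : Finset ℕ) (g : ℕ → β), μ {ω | ∀ t ∈ s, ι t ω = g t} = ∏ t ∈ s, ENNReal.ofReal (p (g t))

lemma measurableSet_setOf_forall_eq (hmeas : ∀ t, Measurable (ι t)) (s : Finset ℕ)
    (g : ℕ → β) : MeasurableSet {ω | ∀ t ∈ s, ι t ω = g t} := by
  simp only [Set.ofPred_forall]
  exact Finset.measurableSet_biInter s fun t _ => hmeas t (measurableSet_singleton _)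

lemma IsIidWithWeights.iIndepSet (hiid : IsIidWithWeights μ ι p) (hmeas : ∀ t, Measurable (ι t))
    {S : ℕ → Finset ℕ} (hS : Pairwise (Disjoint on S)) (g : ℕ → β) :
    ProbabilityTheory.iIndepSet (fun m => {ω | ∀ t ∈ S m, ι t ω = g t}) μ := by
  classical
  rw [ProbabilityTheory.iIndepSet_iff_meas_biInter fun m =>
    measurableSet_setOf_forall_eq hmeas (S m) g]
  intro s
  have hinter : (⋂ m ∈ s, {ω | ∀ t ∈ S m, ι t ω = g t}) =
      {ω | ∀ t ∈ s.biUnion S, ι t ω = g t} := by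
    ext ω
    simp only [Set.mem_iInter, Set.mem_ofPred_eq, Finset.mem_biUnion]
    exact ⟨fun h t ⟨m, hm, ht⟩ => h m hm t ht, fun h m hm t ht => h t ⟨m, hm, ht⟩⟩
  rw [hinter, hiid, Finset.prod_biUnion (hS.set_pairwise _)]
  exact Finset.prod_congr rfl fun m _ => (hiid (S m) g).symm

/-- Second Borel–Cantelli lemma: the disjoint blocks give independent events, each of probability
at least `(min p) ^ L`. -/
lemma IsIidWithWeights.ae_frequently_block_eq [IsProbabilityMeasure μ] [Finite β]
    (hiid : IsIidWithWeights μ ι p) (hmeas : ∀ t, Measurable (ι t))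
    (hp : ∀ k, 0 < p k) (L : ℕ) (g : ℕ → β) :
    ∀ᵐ ω ∂μ, ∃ᶠ m in atTop, ∀ t ∈ Finset.Ioc (m * L) ((m + 1) * L), ι t ω = g t := by
  have : Nonempty β := ⟨g 0⟩
  obtain ⟨c, hc, hcp⟩ := exists_pos_le_of_pos hp
  set E : ℕ → Set Ω := fun m => {ω | ∀ t ∈ Finset.Ioc (m * L) ((m + 1) * L), ι t ω = g t}
  have hE : ∀ m, MeasurableSet (E m) := fun m => measurableSet_setOf_forall_eq hmeas _ g
  have hdisj : Pairwise (Disjoint on fun m => Finset.Ioc (m * L) ((m + 1) * L)) :=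
    fun m m' h => by
      rw [onFun, ← Finset.disjoint_coe, Finset.coe_Ioc, Finset.coe_Ioc]
      exact (Monotone.pairwise_disjoint_on_Ioc_succ
        (fun a b hab => Nat.mul_le_mul_right L hab)) h
  have hbound : ∀ m, ENNReal.ofReal c ^ L ≤ μ (E m) := fun m => by
    rw [hiid]
    simpa [Nat.card_Ioc, add_one_mul] using Finset.pow_card_le_prod
      (Finset.Ioc (m * L) ((m + 1) * L)) _ _ fun t _ => ENNReal.ofReal_le_ofReal (hcp (g t))
  have hsum : ∑' m, μ (E m) = ⊤ := top_le_iff.1 <|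
    (ENNReal.tsum_const_eq_top_of_ne_zero (pow_ne_zero L (ENNReal.ofReal_pos.2 hc).ne')).ge.trans
      (ENNReal.tsum_le_tsum hbound)
  have hlimsup := ProbabilityTheory.measure_limsup_eq_one hE (hiid.iIndepSet hmeas hdisj g)
    hsum
  have hae : ∀ᵐ ω ∂μ, ω ∈ limsup E atTop :=
    (ae_iff_measure_eq (MeasurableSet.measurableSet_limsup hE).nullMeasurableSet).2
      (hlimsup.trans measure_univ.symm)
  filter_upwards [hae] with ω hω
  exact mem_limsup_iff_frequently_mem.1 hω

end Iid

section Reducible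

variable {n : Type*} [Fintype n] {P : Matrix n n ℝ} {S : Set n}

lemma columnWeightedAvg_indicator_compl (hP : ∀ i j, 0 ≤ P i j) {j : n} (hPj : 0 < P j j)
    (hS : ∀ i ∈ S, P i j = 0) : columnWeightedAvg P (Sᶜ.indicator 1) j = 1 := by
  have hnum : ∑ i, P i j * Sᶜ.indicator 1 i = ∑ i, P i j := Finset.sum_congr rfl fun i _ => by
    by_cases hi : i ∈ S
    · simp [hS i hi]
    · simp [hi]
  rw [columnWeightedAvg, hnum, div_self]
  exact (hPj.trans_le (Finset.single_le_sum (fun i _ => hP i j) (mem_univ j))).ne'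

lemma avg_indicator_compl_lt_one {i₀ : n} (hi₀ : i₀ ∈ S) :
    (Fintype.card n : ℝ)⁻¹ * ∑ i, Sᶜ.indicator (1 : n → ℝ) i < 1 := by
  have hind : ∀ i, Sᶜ.indicator (1 : n → ℝ) i ≤ 1 := fun i => by
    by_cases hi : i ∈ S <;> simp [hi]
  rw [inv_mul_lt_iff₀ (Nat.cast_pos.2 (Fintype.card_pos_iff.2 ⟨i₀⟩)), mul_one]
  calc ∑ i, Sᶜ.indicator (1 : n → ℝ) i < ∑ _i : n, (1 : ℝ) :=
        Finset.sum_lt_sum (fun i _ => hind i) ⟨i₀, mem_univ _, by simp [hi₀]⟩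
    _ = Fintype.card n := by simp

end Reducible

section Consensus

variable {N M : ℕ} {K : Fin M → Matrix (Fin N) (Fin N) ℝ} {p : Fin M → ℝ}

lemma sum_smul_apply_nonneg (hK : ∀ k, K k ∈ posDiagStochastic (Fin N)) (hp : ∀ k, 0 < p k)
    (i j : Fin N) : 0 ≤ (∑ k, p k • K k) i j := by
  simp only [Matrix.sum_apply, Matrix.smul_apply, smul_eq_mul]
  exact Finset.sum_nonneg fun k _ => mul_nonneg (hp k).le ((hK k).1.1 i j)

variable [NeZero M]

/-- `K 0 K 1 ⋯ K (M - 1)` is positive wherever `∑ k, p k • K k` is: the positive diagonals keep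
the positive entries of every factor alive. -/
lemma exists_cyclic_rangeProd_pos (hK : ∀ k, K k ∈ posDiagStochastic (Fin N))
    (hp : ∀ k, 0 < p k) (hprim : _root_.IsPrimitive (∑ k, p k • K k)) :
    ∃ m, ∀ i j, 0 < rangeProd (fun u => K (Fin.ofNat M u)) (m * M) i j := by
  set G : ℕ → Matrix (Fin N) (Fin N) ℝ := fun u => K (Fin.ofNat M u)
  have hG : Function.Periodic G M := fun u => congrArg K (Fin.ext (by simp))
  have hsupp : ∀ i j, 0 < (∑ k, p k • K k) i j → 0 < rangeProd G M i j := fun i j h => by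
    simp only [Matrix.sum_apply, Matrix.smul_apply, smul_eq_mul] at h
    obtain ⟨k, -, hk⟩ := (Finset.sum_pos_iff_of_nonneg fun k _ =>
      mul_nonneg (hp k).le ((hK k).1.1 i j)).1 h
    refine rangeProd_apply_pos (fun u => hK _) k.isLt (u := k) ?_
    simpa [G, Nat.mod_eq_of_lt k.isLt] using pos_of_mul_pos_right hk (hp k).le
  obtain ⟨m, -, hm⟩ := hprim
  refine ⟨m, fun i j => ?_⟩
  rw [hG.rangeProd_mul]
  exact pow_apply_pos_of_pos_imp (sum_smul_apply_nonneg hK hp) (rangeProd_mem (fun u => hK _) M).1.1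
    hsupp m (hm i j)

theorem exists_not_tendsto_of_not_isPrimitive
    (hK : ∀ k, K k ∈ posDiagStochastic (Fin N)) (hp : ∀ k, 0 < p k)
    (h : ¬ _root_.IsPrimitive (∑ k, p k • K k)) :
    ∃ (x₀ : Fin N → ℝ) (j : Fin N), ∀ w : ℕ → Fin M,
      ¬ Tendsto (fun t => columnWeightedAvg (rangeProd (fun u => K (w u)) t) x₀ j) atTop
        (𝓝 ((N : ℝ)⁻¹ * ∑ i, x₀ i)) := by
  have hdiag : ∀ i, 0 < (∑ k, p k • K k) i i := fun i => by
    simp only [Matrix.sum_apply, Matrix.smul_apply, smul_eq_mul]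
    exact Finset.sum_pos (fun k _ => mul_pos (hp k) ((hK k).2 i)) ⟨0, mem_univ _⟩
  obtain ⟨S, i₀, hi₀, j₀, hj₀, hS⟩ :=
    exists_closed_of_not_isPrimitive (sum_smul_apply_nonneg hK hp) hdiag h
  have hKS : ∀ k, ∀ i ∈ S, ∀ j ∉ S, K k i j = 0 := fun k i hi j hj => by
    have h0 := hS i hi j hj
    simp only [Matrix.sum_apply, Matrix.smul_apply, smul_eq_mul] at h0
    exact (mul_eq_zero.1 ((Finset.sum_eq_zero_iff_of_nonneg fun k _ =>
      mul_nonneg (hp k).le ((hK k).1.1 i j)).1 h0 k (mem_univ k))).resolve_left (hp k).ne'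
  refine ⟨Sᶜ.indicator 1, j₀, fun w hw => ?_⟩
  have hP : ∀ t, rangeProd (fun u => K (w u)) t ∈ posDiagStochastic (Fin N) :=
    rangeProd_mem fun u => hK (w u)
  have hconst : ∀ t, columnWeightedAvg (rangeProd (fun u => K (w u)) t) (Sᶜ.indicator 1) j₀ = 1 :=
    fun t => columnWeightedAvg_indicator_compl (hP t).1.1 ((hP t).2 j₀)
      (fun i hi => rangeProd_apply_eq_zero (fun u => hKS (w u)) t i hi j₀ hj₀)
  have hlim := tendsto_nhds_unique hw (by simp only [hconst]; exact tendsto_const_nhds)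
  simpa [hlim] using avg_indicator_compl_lt_one (n := Fin N) hi₀

variable {Ω : Type*} [MeasurableSpace Ω] {μ : Measure Ω} {ι : ℕ → Ω → Fin M}

theorem ae_tendsto_of_isPrimitive [IsProbabilityMeasure μ]
    (hK : ∀ k, K k ∈ posDiagStochastic (Fin N)) (hp : ∀ k, 0 < p k)
    (hmeas : ∀ t, Measurable (ι t))
    (hiid : IsIidWithWeights μ ι p)
    (hprim : _root_.IsPrimitive (∑ k, p k • K k)) (x₀ : Fin N → ℝ) :
    ∀ᵐ ω ∂μ, ∀ j, Tendsto (fun t => columnWeightedAvg (rangeProd (fun u => K (ι (u + 1) ω)) t) x₀ j)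
      atTop (𝓝 ((N : ℝ)⁻¹ * ∑ i, x₀ i)) := by
  obtain ⟨m, hQ⟩ := exists_cyclic_rangeProd_pos hK hp hprim
  set G : ℕ → Matrix (Fin N) (Fin N) ℝ := fun u => K (Fin.ofNat M u)
  set L := m * M
  have hG : ∀ b u, G (b * L + u) = G u := fun b u =>
    congrArg K (Fin.ext (by simp [L, ← mul_assoc]))
  filter_upwards [hiid.ae_frequently_block_eq hmeas hp L
    fun t => Fin.ofNat M (t - 1)] with ω hω j
  have hocc : ∃ᶠ b in atTop, rangeProd (fun u => K (ι (b * L + u + 1) ω)) L = rangeProd G L :=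
    hω.mono fun b hb => calc
      _ = rangeProd (fun u => G (b * L + u)) L := rangeProd_congr fun u hu => by
          rw [hb (b * L + u + 1) (Finset.mem_Ioc.2 ⟨by omega, by rw [add_one_mul]; omega⟩)]
          rfl
      _ = rangeProd G L := by simp only [hG]
  simpa using tendsto_columnWeightedAvg (fun u => hK _) hQ hocc x₀ j

end Consensus

theorem stmt14_general {N M : ℕ} (hM : 1 ≤ M)
    (K : Fin M → Matrix (Fin N) (Fin N) ℝ)
    (hK : ∀ k, RowStochastic (K k))
    (hdiag : ∀ k i, 0 < K k i i)
    (p : Fin M → ℝ) (hp : ∀ k, 0 < p k)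
    -- `(K(t))_{t ≥ 1}` is an i.i.d. sequence of random matrices, `K(t) = K (ι t ω)`,
    -- with `ℙ[K(t) = Kᵢ] = pᵢ`:
    {Ω : Type*} [MeasurableSpace Ω] (μ : Measure Ω) [IsProbabilityMeasure μ]
    (ι : ℕ → Ω → Fin M) (hmeas : ∀ t, Measurable (ι t))
    (hiid : ∀ (s : Finset ℕ) (g : ℕ → Fin M),
      μ {ω | ∀ t ∈ s, ι t ω = g t} = ∏ t ∈ s, ENNReal.ofReal (p (g t)))
    -- `P(t) = K(1) K(2) ⋯ K(t)`, `s(t)ᵀ = x(0)ᵀ P(t)`, `w(t)ᵀ = 𝟙ᵀ P(t)`, `x(t) = s(t)/w(t)`: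
    (P : ℕ → Ω → Matrix (Fin N) (Fin N) ℝ)
    (hP : ∀ t ω, P t ω = ((List.range t).map fun u => K (ι (u + 1) ω)).prod)
    (x : (Fin N → ℝ) → ℕ → Ω → Fin N → ℝ)
    (hx : ∀ x0 t ω j, x x0 t ω j = (∑ i, P t ω i j * x0 i) / (∑ i, P t ω i j)) :
    (∀ x0 : Fin N → ℝ,
        ∀ᵐ ω ∂μ, Tendsto (fun t => x x0 t ω) atTop
          (nhds fun _ => (N : ℝ)⁻¹ * ∑ i, x0 i)) ↔
      _root_.IsPrimitive (∑ k, p k • K k) := by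
  have : NeZero M := ⟨by omega⟩
  have hKS : ∀ k, K k ∈ posDiagStochastic (Fin N) :=
    fun k => ⟨mem_rowStochastic_iff_sum.2 (hK k), hdiag k⟩
  have hxP : ∀ x0 t ω j,
      x x0 t ω j = columnWeightedAvg (rangeProd (fun u => K (ι (u + 1) ω)) t) x0 j :=
    fun x0 t ω j => by rw [hx, hP]; rfl
  constructor
  · intro h
    by_contra hprim
    obtain ⟨x0, j, hx0⟩ := exists_not_tendsto_of_not_isPrimitive hKS hp hprim
    obtain ⟨ω, hω⟩ := (h x0).exists
    exact hx0 (fun u => ι (u + 1) ω) (by simpa only [hxP] using tendsto_pi_nhds.1 hω j)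
  · intro hprim x0
    filter_upwards [ae_tendsto_of_isPrimitive hKS hp hmeas hiid hprim x0] with ω hω
    exact tendsto_pi_nhds.2 fun j => by simpa only [hxP] using hω j

theorem stmt14 {N M : ℕ} (hN : 1 ≤ N) (hM : 1 ≤ M)
    (K : Fin M → Matrix (Fin N) (Fin N) ℝ)
    (hK : ∀ k, RowStochastic (K k))
    (hdiag : ∀ k i, 0 < K k i i)
    (p : Fin M → ℝ) (hp : ∀ k, 0 < p k) (hpsum : ∑ k, p k = 1)
    -- `(K(t))_{t ≥ 1}` is an i.i.d. sequence of random matrices, `K(t) = K (ι t ω)`,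
    -- with `ℙ[K(t) = Kᵢ] = pᵢ`:
    {Ω : Type*} [MeasurableSpace Ω] (μ : Measure Ω) [IsProbabilityMeasure μ]
    (ι : ℕ → Ω → Fin M) (hmeas : ∀ t, Measurable (ι t))
    (hiid : ∀ (s : Finset ℕ) (g : ℕ → Fin M),
      μ {ω | ∀ t ∈ s, ι t ω = g t} = ∏ t ∈ s, ENNReal.ofReal (p (g t)))
    -- `P(t) = K(1) K(2) ⋯ K(t)`, `s(t)ᵀ = x(0)ᵀ P(t)`, `w(t)ᵀ = 𝟙ᵀ P(t)`, `x(t) = s(t)/w(t)`: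
    (P : ℕ → Ω → Matrix (Fin N) (Fin N) ℝ)
    (hP : ∀ t ω, P t ω = ((List.range t).map fun u => K (ι (u + 1) ω)).prod)
    (x : (Fin N → ℝ) → ℕ → Ω → Fin N → ℝ)
    (hx : ∀ x0 t ω j, x x0 t ω j = (∑ i, P t ω i j * x0 i) / (∑ i, P t ω i j)) :
    (∀ x0 : Fin N → ℝ,
        ∀ᵐ ω ∂μ, Tendsto (fun t => x x0 t ω) atTop
          (nhds fun _ => (N : ℝ)⁻¹ * ∑ i, x0 i)) ↔
      _root_.IsPrimitive (∑ k, p k • K k) :=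
  stmt14_general hM K hK hdiag p hp μ ι hmeas hiid P hP x hx
end
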